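/- arXiv:1911.06275 — 3 statements merged into one kernel-verified Lean document; each statement's English description precedes it below -/
import Mathlib

section
/- For all integers k >= 2 and e >= 3, there exists an integer n_k with n_k ≡ 0 (mod 2e) such that for every n >= n_k with n ≡ 0 or 1 (mod 2e), there exists a k-chromatic e-star system of order n. -/
structure EStar (n e : ℕ) where
  centre : Fin n
  leaves : Finset (Fin n)
  card_leaves : leaves.card = e
  centre_not_leaf : centre ∉ leaves

instance {n e : ℕ} : DecidableEq (EStar n e) := fun a b =>
  decidable_of_iff (a.centre = b.centre ∧ a.leaves = b.leaves)
    (by cases a; cases b; simp)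

/-- The edge set of an `e`-star: all edges joining the centre to a leaf. -/
def EStar.edges {n e : ℕ} (S : EStar n e) : Finset (Sym2 (Fin n)) :=
  S.leaves.image (fun a => s(S.centre, a))

/-- The vertex set of an `e`-star. -/
def EStar.verts {n e : ℕ} (S : EStar n e) : Finset (Fin n) :=
  insert S.centre S.leaves

/-- An `e`-star system of order `n`: a collection of `e`-stars whose edge sets
partition the edge set of the complete graph `K_n`. -/
structure EStarSystem (n e : ℕ) where
  stars : Finset (EStar n e)
  partition : ∀ p : Sym2 (Fin n), ¬ p.IsDiag →
    ∃! S, S ∈ stars ∧ p ∈ EStar.edges S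

/-- A weak colouring: no star of the system has all of its vertices one colour. -/
def IsWeakColouring {n e k : ℕ} (sys : EStarSystem n e) (c : Fin n → Fin k) : Prop :=
  ∀ S ∈ sys.stars, ∃ a ∈ S.leaves, c a ≠ c S.centre

def Colourable {n e : ℕ} (sys : EStarSystem n e) (k : ℕ) : Prop :=
  ∃ c : Fin n → Fin k, IsWeakColouring sys c

def Chromatic {n e : ℕ} (sys : EStarSystem n e) (k : ℕ) : Prop :=
  Colourable sys k ∧ ¬ Colourable sys (k - 1)

/-- The size of the colour class of colour `i`. -/
def classCard {n k : ℕ} (c : Fin n → Fin k) (i : Fin k) : ℕ :=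
  (Finset.univ.filter (fun v => c v = i)).card

def UniquelyColourable {n e : ℕ} (sys : EStarSystem n e) (k : ℕ) : Prop :=
  ∀ c₁ c₂ : Fin n → Fin k, IsWeakColouring sys c₁ → IsWeakColouring sys c₂ →
    ∃ π : Equiv.Perm (Fin k), c₂ = π ∘ c₁


set_option linter.unusedSectionVars false

namespace Stmt13Aux
open Finset


lemma chop {α : Type*} [DecidableEq α] (e : ℕ) (he : 1 ≤ e) :
    ∀ (B : ℕ) (S D : Finset α), S.card = B * e → D ⊆ S → B ≤ D.card →
    ∃ P : Finset (Finset α),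
      (∀ p ∈ P, p.card = e ∧ (p ∩ D).Nonempty) ∧
      (∀ p ∈ P, ∀ q ∈ P, p ≠ q → Disjoint p q) ∧
      P.biUnion id = S := by
  intro B
  induction B with
  | zero =>
    intro S D hS _ _
    refine ⟨∅, by simp, by simp, ?_⟩
    simp [Finset.card_eq_zero.mp (by simpa using hS)]
  | succ B ih =>
    intro S D hS hDS hBD
    obtain ⟨d, hd⟩ : D.Nonempty := Finset.card_pos.mp (by omega)
    have hdS : d ∈ S := hDS hd
    have hcard_erase : (S.erase d).card = (B+1)*e - 1 := by
      rw [Finset.card_erase_of_mem hdS, hS]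
    obtain ⟨T', hT'sub, hT'card, hT'D⟩ :
        ∃ T' : Finset α, T' ⊆ S.erase d ∧ T'.card = e - 1 ∧ B ≤ (D \ insert d T').card := by
      by_cases h1 : B + e ≤ D.card
      · have hmul : (B+1)*e = B*e + e := by ring
        obtain ⟨T', hsub, hcard⟩ := Finset.exists_subset_card_eq
          (show e - 1 ≤ (S.erase d).card by omega)
        refine ⟨T', hsub, hcard, ?_⟩
        have hle : (insert d T').card ≤ e := by
          have := Finset.card_insert_le d T'
          omega
        have h2 : D.card - (insert d T').card ≤ (D \ insert d T').card :=
          le_card_sdiff _ _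
        omega
      · rcases Nat.eq_zero_or_pos B with hB0 | hBpos
        · subst hB0
          refine ⟨S.erase d, le_refl _, ?_, ?_⟩
          · rw [hcard_erase]; omega
          · have : D ⊆ insert d (S.erase d) := by
              intro x hx
              rcases eq_or_ne x d with rfl | hne
              · exact Finset.mem_insert_self _ _
              · exact Finset.mem_insert_of_mem (Finset.mem_erase.mpr ⟨hne, hDS hx⟩)
            simp [Finset.sdiff_eq_empty_iff_subset.mpr this]
        · have hsd : e - 1 ≤ ((S \ D).erase d).card := by
            have h3 : (S \ D).card = S.card - D.card := Finset.card_sdiff_of_subset hDS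
            have h4 : (S \ D).card - 1 ≤ ((S \ D).erase d).card :=
              Finset.pred_card_le_card_erase
            have hmul : (B+1)*e = B*e + e := by ring
            have hme : B * e = B * (e-1) + B := by
              have he' : e = (e-1)+1 := by omega
              calc B * e = B * ((e-1)+1) := by rw [← he']
                _ = B * (e-1) + B := by ring
            have hbe : e - 1 ≤ B * (e-1) := Nat.le_mul_of_pos_left (e-1) hBpos
            omega
          obtain ⟨T', hsub, hcard⟩ := Finset.exists_subset_card_eq hsd
          have hT'e : T' ⊆ S.erase d := by
            intro x hx
            have hx' := hsub hx
            rw [Finset.mem_erase] at hx' ⊢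
            exact ⟨hx'.1, (Finset.mem_sdiff.mp hx'.2).1⟩
          have hT'Dnone : ∀ x ∈ T', x ∉ D := by
            intro x hx
            have hx' := hsub hx
            rw [Finset.mem_erase] at hx'
            exact (Finset.mem_sdiff.mp hx'.2).2
          refine ⟨T', hT'e, hcard, ?_⟩
          have : D \ insert d T' = D.erase d := by
            ext x
            simp only [Finset.mem_sdiff, Finset.mem_insert, Finset.mem_erase]
            constructor
            · rintro ⟨hxD, hx⟩
              exact ⟨fun h => hx (Or.inl h), hxD⟩
            · rintro ⟨hxd, hxD⟩
              refine ⟨hxD, ?_⟩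
              rintro (rfl | hmem)
              · exact hxd rfl
              · exact hT'Dnone x hmem hxD
          rw [this, Finset.card_erase_of_mem hd]
          omega
    -- common tail
    have hdT' : d ∉ T' := fun h => (Finset.mem_erase.mp (hT'sub h)).1 rfl
    set T : Finset α := insert d T' with hT
    have hTcard : T.card = e := by
      rw [hT, Finset.card_insert_of_notMem hdT', hT'card]; omega
    have hTS : T ⊆ S := by
      intro x hx
      rcases Finset.mem_insert.mp hx with rfl | hx
      · exact hdS
      · exact Finset.erase_subset _ _ (hT'sub hx)
    set S' : Finset α := S \ T with hS'
    have hS'card : S'.card = B * e := by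
      rw [hS', Finset.card_sdiff_of_subset hTS, hS, hTcard]
      have : (B+1)*e = B*e + e := by ring
      omega
    set D' : Finset α := D \ T with hD'
    have hD'S' : D' ⊆ S' := by
      intro x hx
      rw [hD', Finset.mem_sdiff] at hx
      rw [hS', Finset.mem_sdiff]
      exact ⟨hDS hx.1, hx.2⟩
    obtain ⟨P', hP'props, hP'disj, hP'union⟩ := ih S' D' hS'card hD'S' hT'D
    refine ⟨insert T P', ?_, ?_, ?_⟩
    · intro p hp
      rcases Finset.mem_insert.mp hp with rfl | hp
      · exact ⟨hTcard, ⟨d, Finset.mem_inter.mpr ⟨Finset.mem_insert_self _ _, hd⟩⟩⟩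
      · obtain ⟨h1, x, hx⟩ := hP'props p hp
        refine ⟨h1, ⟨x, ?_⟩⟩
        rw [Finset.mem_inter] at hx ⊢
        exact ⟨hx.1, (Finset.sdiff_subset) hx.2⟩
    · have hsubS' : ∀ p ∈ P', p ⊆ S' := by
        intro p hp x hx
        rw [← hP'union]
        exact Finset.mem_biUnion.mpr ⟨p, hp, hx⟩
      have hTdisj : ∀ p ∈ P', Disjoint T p := by
        intro p hp
        exact Finset.disjoint_right.mpr (fun x hx =>
          (Finset.mem_sdiff.mp (hsubS' p hp hx)).2)
      intro p hp q hq hpq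
      rcases Finset.mem_insert.mp hp with rfl | hp
      · rcases Finset.mem_insert.mp hq with rfl | hq
        · exact absurd rfl hpq
        · exact hTdisj q hq
      · rcases Finset.mem_insert.mp hq with rfl | hq
        · exact (hTdisj p hp).symm
        · exact hP'disj p hp q hq hpq
    · rw [Finset.biUnion_insert, hP'union, hS', id]
      exact Finset.union_sdiff_of_subset hTS




lemma encode_inj {gj i i' x x' : ℕ} (hx : x < gj) (hx' : x' < gj)
    (h : i * gj + x = i' * gj + x') : i = i' ∧ x = x' := by
  rcases lt_trichotomy i i' with h1 | rfl | h1
  · have h2 : (i+1) * gj ≤ i' * gj := Nat.mul_le_mul_right _ h1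
    have h3 : (i+1) * gj = i * gj + gj := by ring
    omega
  · omega
  · have h2 : (i'+1) * gj ≤ i * gj := Nat.mul_le_mul_right _ h1
    have h3 : (i'+1) * gj = i' * gj + gj := by ring
    omega

/-- A gadget forcing `j`-chromaticity, on vertex indices `< g`. -/
structure Gad (e j : ℕ) where
  g : ℕ
  hg : 0 < g
  stars : Finset (ℕ × Finset ℕ)
  hcard : ∀ s ∈ stars, s.2.card = e
  horder : ∀ s ∈ stars, ∀ l ∈ s.2, s.1 < l
  hbound : ∀ s ∈ stars, ∀ l ∈ s.2, l < g
  hcentre : ∀ s ∈ stars, s.1 < g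
  hdisj : ∀ s ∈ stars, ∀ t ∈ stars, s ≠ t → s.1 = t.1 → Disjoint s.2 t.2
  chi : ℕ → ℕ
  hchilt : ∀ v, chi v < j
  hchi : ∀ s ∈ stars, ∃ l ∈ s.2, chi l ≠ chi s.1
  force : ∀ c : ℕ → ℕ, (((Finset.range g).image c).card ≤ j - 1) →
      ∃ s ∈ stars, ∀ l ∈ s.2, c l = c s.1
  hge : 2 ≤ j → e ≤ g

def gadBase (e : ℕ) : Gad e 1 where
  g := 1
  hg := one_pos
  stars := ∅
  hcard := by simp
  horder := by simp
  hbound := by simp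
  hcentre := by simp
  hdisj := by simp
  chi := fun _ => 0
  hchilt := fun _ => one_pos
  hchi := by simp
  force := by
    intro c hc
    exfalso
    have h0 : (0:ℕ) ∈ Finset.range 1 := by simp
    have h1 : c 0 ∈ (Finset.range 1).image c := Finset.mem_image_of_mem c h0
    have := Finset.card_pos.mpr ⟨c 0, h1⟩
    omega
  hge := by omega

noncomputable def gadStep (e j : ℕ) (he : 1 ≤ e) (G : Gad e (j+1)) : Gad e (j+2) := by
  classical
  set w := (j+1) * e with hw
  have hw0 : 0 < w := by positivity
  set l : List (Finset ℕ) := ((Finset.range w).powersetCard e).toList with hl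
  set T := l.length with hT
  set gj := G.g with hgj
  have hgj0 : 0 < gj := G.hg
  set base := T * gj with hbase
  set g' := base + w with hg'2
  set P : ℕ → Finset ℕ := fun i => l.getD i ∅ with hP
  have hPmem : ∀ i, i < T → (P i).card = e ∧ P i ⊆ Finset.range w := by
    intro i hi
    have : P i = l[i] := List.getD_eq_getElem l ∅ hi
    have hmem : l[i] ∈ ((Finset.range w).powersetCard e) := by
      rw [← Finset.mem_toList]
      exact List.getElem_mem _
    rw [Finset.mem_powersetCard] at hmem
    rw [this]
    exact ⟨hmem.2, hmem.1⟩
  set bridge : ℕ → ℕ → ℕ × Finset ℕ :=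
    fun i v => (i * gj + v, (P i).image (base + ·)) with hbridge
  set intst : ℕ → (ℕ × Finset ℕ) → ℕ × Finset ℕ :=
    fun i s => (i * gj + s.1, s.2.image (i * gj + ·)) with hintst
  set stars' := (Finset.range T).biUnion (fun i =>
      G.stars.image (intst i) ∪ (Finset.range gj).image (bridge i)) with hstars'
  have hceb : ∀ i x, i < T → x < gj → i * gj + x < base := by
    intro i x hi hx
    calc i * gj + x < i * gj + gj := by omega
    _ = (i+1) * gj := by ring
    _ ≤ T * gj := Nat.mul_le_mul_right _ hi
  have hmem' : ∀ s, s ∈ stars' ↔ ∃ i, i < T ∧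
      ((∃ s₀ ∈ G.stars, s = intst i s₀) ∨ (∃ v, v < gj ∧ s = bridge i v)) := by
    intro s
    rw [hstars', Finset.mem_biUnion]
    constructor
    · rintro ⟨i, hi, hs⟩
      rw [Finset.mem_union] at hs
      refine ⟨i, Finset.mem_range.mp hi, ?_⟩
      rcases hs with hs | hs
      · obtain ⟨s₀, hs₀, rfl⟩ := Finset.mem_image.mp hs
        exact Or.inl ⟨s₀, hs₀, rfl⟩
      · obtain ⟨v, hv, rfl⟩ := Finset.mem_image.mp hs
        exact Or.inr ⟨v, Finset.mem_range.mp hv, rfl⟩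
    · rintro ⟨i, hi, hs⟩
      refine ⟨i, Finset.mem_range.mpr hi, ?_⟩
      rw [Finset.mem_union]
      rcases hs with ⟨s₀, hs₀, rfl⟩ | ⟨v, hv, rfl⟩
      · exact Or.inl (Finset.mem_image_of_mem _ hs₀)
      · exact Or.inr (Finset.mem_image_of_mem _ (Finset.mem_range.mpr hv))
  -- leaves of internal stars are < base; leaves of bridge stars are ≥ base and < g'
  have hintleaf : ∀ i s₀, i < T → s₀ ∈ G.stars → ∀ x ∈ (intst i s₀).2, x < base := by
    intro i s₀ hi hs₀ x hx
    obtain ⟨l₀, hl₀, rfl⟩ := Finset.mem_image.mp hx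
    exact hceb i l₀ hi (G.hbound s₀ hs₀ l₀ hl₀)
  have hbrleaf : ∀ i v, i < T → ∀ x ∈ (bridge i v).2, base ≤ x ∧ x < g' := by
    intro i v hi x hx
    obtain ⟨y, hy, rfl⟩ := Finset.mem_image.mp hx
    have := (hPmem i hi).2 hy
    rw [Finset.mem_range] at this
    omega
  refine
  { g := g'
    hg := by positivity
    stars := stars'
    chi := fun v => if v < base then G.chi (v % gj) else (j+1)
    hcard := ?_, horder := ?_, hbound := ?_, hcentre := ?_, hdisj := ?_
    hchilt := ?_, hchi := ?_, force := ?_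
    hge := ?_ }
  · -- hcard
    intro s hs
    rcases (hmem' s).mp hs with ⟨i, hi, ⟨s₀, hs₀, rfl⟩ | ⟨v, hv, rfl⟩⟩
    · rw [hintst]
      simp only []
      rw [Finset.card_image_of_injective _ (add_right_injective _)]
      exact G.hcard s₀ hs₀
    · rw [hbridge]
      simp only []
      rw [Finset.card_image_of_injective _ (add_right_injective _)]
      exact (hPmem i hi).1
  · -- horder
    intro s hs x hx
    rcases (hmem' s).mp hs with ⟨i, hi, ⟨s₀, hs₀, rfl⟩ | ⟨v, hv, rfl⟩⟩
    · obtain ⟨l₀, hl₀, rfl⟩ := Finset.mem_image.mp hx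
      have := G.horder s₀ hs₀ l₀ hl₀
      simp only [hintst]
      omega
    · have h1 := (hbrleaf i v hi x hx).1
      have h2 := hceb i v hi hv
      simp only [hbridge] at h1 ⊢
      omega
  · -- hbound
    intro s hs x hx
    rcases (hmem' s).mp hs with ⟨i, hi, ⟨s₀, hs₀, rfl⟩ | ⟨v, hv, rfl⟩⟩
    · have := hintleaf i s₀ hi hs₀ x hx
      omega
    · exact (hbrleaf i v hi x hx).2
  · -- hcentre
    intro s hs
    rcases (hmem' s).mp hs with ⟨i, hi, ⟨s₀, hs₀, rfl⟩ | ⟨v, hv, rfl⟩⟩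
    · have := hceb i s₀.1 hi (G.hcentre s₀ hs₀)
      simp only [hintst]
      omega
    · have := hceb i v hi hv
      simp only [hbridge]
      omega
  · -- hdisj
    intro s hs t ht hne hceq
    rcases (hmem' s).mp hs with ⟨i, hi, ⟨s₀, hs₀, rfl⟩ | ⟨v, hv, rfl⟩⟩ <;>
      rcases (hmem' t).mp ht with ⟨i', hi', ⟨t₀, ht₀, rfl⟩ | ⟨v', hv', rfl⟩⟩
    · -- internal / internal
      simp only [hintst] at hceq
      obtain ⟨rfl, hcc⟩ := encode_inj (G.hcentre s₀ hs₀) (G.hcentre t₀ ht₀) hceq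
      have hne₀ : s₀ ≠ t₀ := by
        rintro rfl; exact hne rfl
      have hD := G.hdisj s₀ hs₀ t₀ ht₀ hne₀ hcc
      simp only [hintst]
      exact (Finset.disjoint_image (add_right_injective _)).mpr hD
    · -- internal / bridge
      refine Finset.disjoint_left.mpr ?_
      intro x hx hx'
      have h1 := hintleaf i s₀ hi hs₀ x hx
      have h2 := (hbrleaf i' v' hi' x hx').1
      omega
    · -- bridge / internal
      refine Finset.disjoint_left.mpr ?_
      intro x hx hx'
      have h1 := hintleaf i' t₀ hi' ht₀ x hx'
      have h2 := (hbrleaf i v hi x hx).1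
      omega
    · -- bridge / bridge
      exfalso
      simp only [hbridge] at hceq
      obtain ⟨rfl, rfl⟩ := encode_inj hv hv' hceq
      exact hne rfl
  · -- hchilt
    intro v
    by_cases h : v < base <;> simp [h]
    · exact lt_trans (G.hchilt _) (by omega)
  · -- hchi
    intro s hs
    rcases (hmem' s).mp hs with ⟨i, hi, ⟨s₀, hs₀, rfl⟩ | ⟨v, hv, rfl⟩⟩
    · obtain ⟨l₀, hl₀, hlne⟩ := G.hchi s₀ hs₀
      refine ⟨i * gj + l₀, Finset.mem_image_of_mem _ hl₀, ?_⟩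
      have hb1 : i * gj + l₀ < base := hceb i l₀ hi (G.hbound s₀ hs₀ l₀ hl₀)
      have hb2 : i * gj + s₀.1 < base := hceb i s₀.1 hi (G.hcentre s₀ hs₀)
      simp only [hintst, hb1, hb2, if_pos]
      have e1 : (i * gj + l₀) % gj = l₀ := by
        rw [mul_comm, Nat.mul_add_mod]
        exact Nat.mod_eq_of_lt (G.hbound s₀ hs₀ l₀ hl₀)
      have e2 : (i * gj + s₀.1) % gj = s₀.1 := by
        rw [mul_comm, Nat.mul_add_mod]
        exact Nat.mod_eq_of_lt (G.hcentre s₀ hs₀)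
      rw [e1, e2]
      exact hlne
    · have hPc := (hPmem i hi).1
      have : (P i).Nonempty := Finset.card_pos.mp (by omega)
      obtain ⟨y, hy⟩ := this
      refine ⟨base + y, Finset.mem_image_of_mem _ hy, ?_⟩
      have hb2 : i * gj + v < base := hceb i v hi hv
      have hb1 : ¬ (base + y < base) := by omega
      simp only [hbridge, hb1, hb2, if_pos, if_neg, if_false]
      have := G.hchilt ((i * gj + v) % gj)
      omega
  · -- force
    intro c hc
    -- hc : ((range g').image c).card ≤ j + 1
    set f : ℕ → ℕ := fun y => c (base + y) with hf
    set t : Finset ℕ := (Finset.range w).image f with ht2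
    have htsub : t ⊆ (Finset.range g').image c := by
      intro x hx
      obtain ⟨y, hy, rfl⟩ := Finset.mem_image.mp hx
      rw [Finset.mem_range] at hy
      exact Finset.mem_image_of_mem c (Finset.mem_range.mpr (by omega))
    have htcard : t.card * e ≤ (Finset.range w).card := by
      rw [Finset.card_range]
      calc t.card * e ≤ (j+1) * e := by
            apply Nat.mul_le_mul_right
            exact le_trans (Finset.card_le_card htsub) hc
      _ = w := rfl
    have htne : t.Nonempty := by
      apply Finset.image_nonempty.mpr
      rw [Finset.nonempty_range_iff]
      omega
    obtain ⟨γ, hγt, hγfib⟩ :=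
      Finset.exists_le_card_fiber_of_mul_le_card_of_maps_to
        (fun a ha => Finset.mem_image_of_mem f ha) htne htcard
    set fib := {x ∈ Finset.range w | f x = γ} with hfib
    obtain ⟨P₀, hP₀sub, hP₀card⟩ := Finset.exists_subset_card_eq hγfib
    have hP₀mem : P₀ ∈ (Finset.range w).powersetCard e := by
      rw [Finset.mem_powersetCard]
      constructor
      · exact hP₀sub.trans (Finset.filter_subset _ _)
      · exact hP₀card
    have hP₀l : P₀ ∈ l := Finset.mem_toList.mpr hP₀mem
    set i := l.idxOf P₀ with hi
    have hiT : i < T := List.idxOf_lt_length_iff.mpr hP₀l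
    have hPi : P i = P₀ := by
      rw [hP]
      simp only []
      rw [List.getD_eq_getElem l ∅ hiT]
      exact List.getElem_idxOf hiT
    by_cases hcase : ∃ v, v < gj ∧ c (i * gj + v) = γ
    · obtain ⟨v, hv, hcv⟩ := hcase
      refine ⟨bridge i v, ?_, ?_⟩
      · rw [hmem' _]
        exact ⟨i, hiT, Or.inr ⟨v, hv, rfl⟩⟩
      · intro x hx
        obtain ⟨y, hy, rfl⟩ := Finset.mem_image.mp hx
        rw [hPi] at hy
        have := hP₀sub hy
        rw [hfib, Finset.mem_filter] at this
        simp only [hbridge]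
        rw [hcv]
        exact this.2
    · push_neg at hcase
      set c' : ℕ → ℕ := fun v => c (i * gj + v) with hc'
      have hforce : ((Finset.range gj).image c').card ≤ (j + 1) - 1 := by
        have hsub : (Finset.range gj).image c' ⊆ ((Finset.range g').image c).erase γ := by
          intro x hx
          obtain ⟨v, hv, rfl⟩ := Finset.mem_image.mp hx
          rw [Finset.mem_range] at hv
          rw [Finset.mem_erase]
          constructor
          · exact hcase v hv
          · have hlt : i * gj + v < g' := by
              have := hceb i v hiT hv
              omega
            exact Finset.mem_image_of_mem c (Finset.mem_range.mpr hlt)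
        have hγmem : γ ∈ (Finset.range g').image c := htsub hγt
        have := Finset.card_le_card hsub
        rw [Finset.card_erase_of_mem hγmem] at this
        omega
      obtain ⟨s₀, hs₀, hmono⟩ := G.force c' hforce
      refine ⟨intst i s₀, ?_, ?_⟩
      · rw [hmem' _]
        exact ⟨i, hiT, Or.inl ⟨s₀, hs₀, rfl⟩⟩
      · intro x hx
        simp only [hintst] at hx ⊢
        obtain ⟨l₀, hl₀, rfl⟩ := Finset.mem_image.mp hx
        exact hmono l₀ hl₀
  · -- hge
    intro _
    have h1 : 1 * e ≤ (j+1) * e := Nat.mul_le_mul_right e (by omega)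
    omega

noncomputable def buildGad (e : ℕ) (he : 1 ≤ e) : (j : ℕ) → Gad e (j + 1)
  | 0 => gadBase e
  | (j+1) => gadStep e j he (buildGad e he j)




/-- distance sets for the circulant orientation -/
def distSet (M e x : ℕ) (par : Bool) : Finset ℕ :=
  if par then Finset.Icc 1 M
  else if x < M then Finset.Icc 1 M
  else if (x - M) % e = 0 then Finset.Icc e (M-1)
  else insert (2*M - (x - M) % e) (Finset.Icc 1 (M-1))

def own (M e x d : ℕ) (par : Bool) : Prop :=
  if par then 1 ≤ d ∧ d ≤ M
  else if x < M then 1 ≤ d ∧ d ≤ M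
  else if (x - M) % e = 0 then e ≤ d ∧ d ≤ M-1
  else d = 2*M - (x - M) % e ∨ (1 ≤ d ∧ d ≤ M-1)

lemma mem_distSet {M e x d : ℕ} {par : Bool} :
    d ∈ distSet M e x par ↔ own M e x d par := by
  unfold distSet own
  split_ifs <;> simp [Finset.mem_Icc, Finset.mem_insert]

lemma own_xor_core {n M e : ℕ} {par : Bool} (he : 3 ≤ e) (heM : e ∣ M) (hM : 3*e ≤ M)
    (hn : n = 2*M + (if par then 1 else 0)) (x d : ℕ) (hx : x < n) (hd1 : 1 ≤ d)
    (hdM : d ≤ M) :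
    (own M e x d par ↔ ¬ own M e ((x + d) % n) (n - d) par) := by
  have hM3 : 9 ≤ M := by omega
  have hn0 : 0 < n := by omega
  cases par with
  | true =>
    simp only [if_true] at hn
    unfold own
    simp only [if_true]
    constructor
    · intro _ h
      omega
    · intro _
      omega
  | false =>
    simp only [if_false, Bool.false_eq_true] at hn ⊢
    -- n = 2M
    set y := (x + d) % n with hy
    have hyn : y < n := Nat.mod_lt _ hn0
    have hycases : (x + d < n ∧ y = x + d) ∨ (n ≤ x + d ∧ y = x + d - n) := by
      rcases lt_or_ge (x + d) n with h | h
      · exact Or.inl ⟨h, Nat.mod_eq_of_lt h⟩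
      · refine Or.inr ⟨h, ?_⟩
        rw [hy, Nat.mod_eq_sub_mod h, Nat.mod_eq_of_lt (by omega)]
    unfold own
    simp only [if_neg, Bool.false_eq_true, if_false]
    -- helper facts about (· - M) % e
    rcases Nat.lt_or_ge d e with hde | hde
    · -- 1 ≤ d ≤ e-1
      rcases hycases with ⟨hlt, hyv⟩ | ⟨hge, hyv⟩
      · -- no wrap : y = x + d
        by_cases hxM : x < M
        · -- x lower: own x d true; need y side false
          rw [if_pos hxM]
          by_cases hyM : y < M
          · rw [if_pos hyM]
            simp only [iff_true_intro (by omega : 1 ≤ d ∧ d ≤ M)]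
            rw [true_iff]
            intro h
            omega
          · rw [if_neg hyM]
            have hay : y - M < d := by omega
            have hrey : (y - M) % e = y - M := Nat.mod_eq_of_lt (by omega)
            by_cases hr0 : (y - M) % e = 0
            · rw [if_pos hr0]
              simp only [iff_true_intro (by omega : 1 ≤ d ∧ d ≤ M)]
              rw [true_iff]
              intro h
              omega
            · rw [if_neg hr0]
              simp only [iff_true_intro (by omega : 1 ≤ d ∧ d ≤ M)]
              rw [true_iff]
              intro h
              rcases h with h | h
              · omega
              · omega
        · -- x upper
          rw [if_neg hxM]
          have hxub : x ≤ 2*M - 1 := by omega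
          have haM : x - M < M := by omega
          by_cases hr0 : (x - M) % e = 0
          · -- own x d false (d < e); need y side TRUE: y ≥ M, r_y = d
            rw [if_pos hr0]
            -- x - M ≤ M - e since (x-M) ≡ 0 mod e and < M, e ∣ M
            have hxMe : x - M ≤ M - e := by
              obtain ⟨m', hm'⟩ := heM
              obtain ⟨q, hq⟩ := (Nat.dvd_of_mod_eq_zero hr0)
              have hqm : q < m' := by
                by_contra hc
                push_neg at hc
                have h5 : e * m' ≤ e * q := Nat.mul_le_mul_left _ hc
                omega
              have h6 : e * q ≤ e * (m' - 1) := Nat.mul_le_mul_left _ (by omega)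
              have hm1 : m' - 1 + 1 = m' := by omega
              have h7 : e * (m' - 1) + e = e * m' := by
                conv_rhs => rw [← hm1]
                ring
              omega
            have hyM : ¬ y < M := by omega
            rw [if_neg hyM]
            have hyr : (y - M) % e = d := by
              have h1 : y - M = (x - M) + d := by omega
              obtain ⟨q, hq⟩ := Nat.dvd_of_mod_eq_zero hr0
              rw [h1, hq, Nat.mul_add_mod]
              exact Nat.mod_eq_of_lt (by omega)
            rw [if_neg (by omega : ¬ (y - M) % e = 0)]
            constructor
            · intro h
              omega
            · intro h
              exfalso
              apply h
              left
              omega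
          · -- own x d true; y side false
            rw [if_neg hr0]
            have hrx : (x - M) % e < e := Nat.mod_lt _ (by omega)
            have hrx1 : 1 ≤ (x - M) % e := by omega
            have h2Mr : 2*M - (x - M) % e ≥ M + 1 := by omega
            simp only [iff_true_intro (show d = 2*M - (x-M)%e ∨ (1 ≤ d ∧ d ≤ M-1) by
              right; constructor; omega;
              · -- d ≤ M - 1 : if d = M then d ≥ e contradiction with d < e... d < e ≤ M
                omega)]
            rw [true_iff]
            have hyM : ¬ y < M := by omega
            rw [if_neg hyM]
            have hyMv : y - M = (x - M) + d := by omega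
            have hry : (y - M) % e = ((x - M) % e + d) % e := by
              rw [hyMv, Nat.add_mod, Nat.mod_eq_of_lt (show d < e by omega)]
            by_cases hr0y : (y - M) % e = 0
            · rw [if_pos hr0y]
              intro h
              omega
            · rw [if_neg hr0y]
              intro h
              rcases h with h | h
              · -- n - d = 2M - r_y → d = r_y; but r_y = (r_x + d) % e with r_x ≠ 0
                have hryd : (y - M) % e < e := Nat.mod_lt _ (by omega)
                have hd' : d = (y - M) % e := by omega
                -- (r_x + d) % e = d with r_x ∈ [1, e-1], d ∈ [1, e-1]
                rw [hry] at hd'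
                rcases Nat.lt_or_ge ((x - M) % e + d) e with hlt2 | hge2
                · rw [Nat.mod_eq_of_lt hlt2] at hd'
                  omega
                · have : (x - M) % e + d < 2*e := by omega
                  rw [Nat.mod_eq_sub_mod hge2, Nat.mod_eq_of_lt (by omega)] at hd'
                  omega
              · omega
      · -- wrap with small d : x ≥ n - d, y = x + d - n < d ≤ e-1 < M (lower)
        have hyM : y < M := by omega
        have hxM : ¬ x < M := by omega
        rw [if_neg hxM, if_pos hyM]
        -- y side: 1 ≤ n - d ∧ n - d ≤ M : n - d = 2M - d ≥ M+1 : false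
        have hxmM : x - M ≥ M - d := by omega
        -- (x - M) % e ≠ 0 since multiples of e that are ≥ M - d > M - e are ≥ M > x - M
        have hxr : (x - M) % e ≠ 0 := by
          intro h0
          obtain ⟨q, hq⟩ := Nat.dvd_of_mod_eq_zero h0
          obtain ⟨m', hm'⟩ := heM
          have hqm : q < m' := by
            rcases Nat.lt_or_ge q m' with h | h
            · exact h
            · exfalso
              have : x - M ≥ e * m' := by
                rw [hq]
                exact Nat.mul_le_mul_left _ h
              omega
          have h6 : e * q ≤ e * (m' - 1) := Nat.mul_le_mul_left _ (by omega)
          have hm1 : m' - 1 + 1 = m' := by omega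
          have h7 : e * (m' - 1) + e = e * m' := by
            conv_rhs => rw [← hm1]
            ring
          omega
        rw [if_neg hxr]
        have hrx : (x - M) % e < e := Nat.mod_lt _ (by omega)
        -- own x d: d = 2M - r_x ∨ 1 ≤ d ≤ M - 1 ; d ≤ e-1 < M : d = 2M - r_x impossible (≥ M+1)
        constructor
        · intro _ h
          omega
        · intro _
          right
          omega
    · -- e ≤ d ≤ M
      rcases Nat.eq_or_lt_of_le hdM with hdM' | hdM'
      · -- d = M
        have hkey : (x < M ∧ ¬ y < M) ∨ (¬ x < M ∧ y < M) := by
          rcases hycases with ⟨hlt, hyv⟩ | ⟨hge, hyv⟩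
          · left; omega
          · right; omega
        have hnM : n - d = M := by omega
        rw [hnM]
        rcases hkey with ⟨h1, h2⟩ | ⟨h1, h2⟩
        · rw [if_pos h1, if_neg h2]
          simp only [iff_true_intro (by omega : 1 ≤ d ∧ d ≤ M)]
          rw [true_iff]
          by_cases hr0 : (y - M) % e = 0
          · rw [if_pos hr0]; intro h; omega
          · rw [if_neg hr0]
            intro h
            have hry : (y - M) % e < e := Nat.mod_lt _ (by omega)
            rcases h with h | h <;> omega
        · rw [if_neg h1, if_pos h2]
          have htriv : (1 ≤ M ∧ M ≤ M) := by omega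
          constructor
          · intro h
            exfalso
            by_cases hr0 : (x - M) % e = 0
            · rw [if_pos hr0] at h; omega
            · rw [if_neg hr0] at h
              have hrx : (x - M) % e < e := Nat.mod_lt _ (by omega)
              rcases h with h | h <;> omega
          · intro h
            exact absurd htriv h
      · -- e ≤ d ≤ M - 1 : own x d TRUE, y side FALSE
        have hown : own M e x d false := by
          unfold own
          simp only [Bool.false_eq_true, if_false]
          by_cases hxM : x < M
          · rw [if_pos hxM]; omega
          · rw [if_neg hxM]
            by_cases hr0 : (x - M) % e = 0
            · rw [if_pos hr0]; omega
            · rw [if_neg hr0]; right; omega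
        unfold own at hown
        simp only [Bool.false_eq_true, if_false] at hown
        constructor
        · intro _
          intro h
          -- n - d ∈ [M+1, 2M-e] can't be owned by y
          have hnd1 : M + 1 ≤ n - d := by omega
          have hnd2 : n - d ≤ 2*M - e := by omega
          by_cases hyM : y < M
          · rw [if_pos hyM] at h; omega
          · rw [if_neg hyM] at h
            by_cases hr0 : (y - M) % e = 0
            · rw [if_pos hr0] at h; omega
            · rw [if_neg hr0] at h
              have hry : (y - M) % e < e := Nat.mod_lt _ (by omega)
              have hry1 : 1 ≤ (y - M) % e := by omega
              rcases h with h | h <;> omega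
        · intro _
          exact hown




def vadd {n : ℕ} (v : Fin n) (d : ℕ) : Fin n :=
  ⟨(v.val + d) % n, Nat.mod_lt _ (Nat.lt_of_le_of_lt (Nat.zero_le _) v.isLt)⟩

def dist {n : ℕ} (x y : Fin n) : ℕ := (y.val + n - x.val) % n

lemma mod_add_inj {a d d' n : ℕ} (hd : d < n) (hd' : d' < n)
    (h : (a + d) % n = (a + d') % n) : d = d' := by
  have h2 : d % n = d' % n := Nat.ModEq.add_left_cancel' a h
  rwa [Nat.mod_eq_of_lt hd, Nat.mod_eq_of_lt hd'] at h2

lemma dist_vadd {n : ℕ} (v : Fin n) (d : ℕ) (hd : d < n) : dist v (vadd v d) = d := by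
  have hn0 : 0 < n := Nat.lt_of_le_of_lt (Nat.zero_le _) v.isLt
  unfold dist vadd
  simp only []
  rcases Nat.lt_or_ge (v.val + d) n with h | h
  · rw [Nat.mod_eq_of_lt h]
    have harg : v.val + d + n - v.val = d + n := by omega
    rw [harg, Nat.add_mod_right]
    exact Nat.mod_eq_of_lt hd
  · have hval : (v.val + d) % n = v.val + d - n := by
      rw [Nat.mod_eq_sub_mod h]
      exact Nat.mod_eq_of_lt (by omega)
    rw [hval]
    have harg : v.val + d - n + n - v.val = d := by omega
    rw [harg]
    exact Nat.mod_eq_of_lt hd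
  
lemma vadd_dist {n : ℕ} (v y : Fin n) : vadd v (dist v y) = y := by
  have hn0 : 0 < n := Nat.lt_of_le_of_lt (Nat.zero_le _) v.isLt
  unfold dist vadd
  apply Fin.ext
  simp only []
  rcases Nat.lt_or_ge y.val v.val with h | h
  · have h1 : y.val + n - v.val < n := by omega
    rw [Nat.mod_eq_of_lt h1]
    have harg : v.val + (y.val + n - v.val) = y.val + n := by omega
    rw [harg, Nat.add_mod_right]
    exact Nat.mod_eq_of_lt y.isLt
  · have h1 : y.val + n - v.val = (y.val - v.val) + n := by omega
    rw [h1, Nat.add_mod_right,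
      Nat.mod_eq_of_lt (show y.val - v.val < n by omega)]
    have harg : v.val + (y.val - v.val) = y.val := by omega
    rw [harg]
    exact Nat.mod_eq_of_lt y.isLt

lemma dist_lt {n : ℕ} (x y : Fin n) : dist x y < n :=
  Nat.mod_lt _ (Nat.lt_of_le_of_lt (Nat.zero_le _) x.isLt)

lemma dist_self {n : ℕ} (v : Fin n) : dist v v = 0 := by
  unfold dist
  have hn0 : 0 < n := Nat.lt_of_le_of_lt (Nat.zero_le _) v.isLt
  have : v.val + n - v.val = n := by omega
  rw [this, Nat.mod_self]

lemma dist_pos {n : ℕ} {x y : Fin n} (h : x ≠ y) : 1 ≤ dist x y := by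
  by_contra hc
  push_neg at hc
  have h0 : dist x y = 0 := by omega
  have := vadd_dist x y
  rw [h0] at this
  unfold vadd at this
  apply h
  apply Fin.ext
  have : (x.val + 0) % n = y.val := congrArg Fin.val this
  rwa [Nat.add_zero, Nat.mod_eq_of_lt x.isLt] at this

lemma dist_rev {n : ℕ} {x y : Fin n} (h : x ≠ y) : dist y x = n - dist x y := by
  have hn0 : 0 < n := Nat.lt_of_le_of_lt (Nat.zero_le _) x.isLt
  have hne : x.val ≠ y.val := fun hv => h (Fin.ext hv)
  unfold dist
  rcases Nat.lt_or_ge x.val y.val with hl | hl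
  · have h1 : y.val + n - x.val = (y.val - x.val) + n := by omega
    rw [h1, Nat.add_mod_right, Nat.mod_eq_of_lt (show y.val - x.val < n by omega)]
    rw [Nat.mod_eq_of_lt (show x.val + n - y.val < n by omega)]
    omega
  · have hl' : y.val < x.val := by omega
    have h1 : x.val + n - y.val = (x.val - y.val) + n := by omega
    rw [h1, Nat.add_mod_right, Nat.mod_eq_of_lt (show x.val - y.val < n by omega)]
    rw [Nat.mod_eq_of_lt (show y.val + n - x.val < n by omega)]
    omega




section OutS

variable {n M e : ℕ} {par : Bool}

def outS (M e : ℕ) (par : Bool) {n : ℕ} (v : Fin n) : Finset (Fin n) :=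
  (distSet M e v.val par).image (vadd v)

variable (he : 3 ≤ e) (heM : e ∣ M) (hM : 3*e ≤ M)
  (hn : n = 2*M + (if par then 1 else 0))

include he heM hM in
lemma own_xor (hn : n = 2*M + (if par then 1 else 0)) (x d : ℕ) (hx : x < n) (hd1 : 1 ≤ d)
    (hdn : d < n) :
    own M e x d par ↔ ¬ own M e ((x + d) % n) (n - d) par := by
  have hn0 : 0 < n := by split at hn <;> omega
  rcases le_or_gt d M with h | h
  · exact own_xor_core he heM hM hn x d hx hd1 h
  · set y := (x + d) % n with hy
    have hyn : y < n := Nat.mod_lt _ hn0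
    have hd' : 1 ≤ n - d := by omega
    have hd'M : n - d ≤ M := by split at hn <;> omega
    have hcore := own_xor_core he heM hM hn y (n - d) hyn hd' hd'M
    have hyx : (y + (n - d)) % n = x := by
      rw [hy, Nat.mod_add_mod]
      have harg : x + d + (n - d) = x + n := by omega
      rw [harg, Nat.add_mod_right]
      exact Nat.mod_eq_of_lt hx
    rw [hyx] at hcore
    have hnn : n - (n - d) = d := by omega
    rw [hnn] at hcore
    constructor
    · intro hx' hy'
      exact (hcore.mp hy') hx'
    · intro h2
      by_contra h3
      exact h2 (hcore.mpr h3)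

include he hM hn in
lemma distSet_bounds {x : ℕ} : ∀ d ∈ distSet M e x par, 1 ≤ d ∧ d ≤ n - 1 := by
  intro d hd
  rw [mem_distSet] at hd
  unfold own at hd
  have hM9 : 9 ≤ M := by omega
  split_ifs at hd with h1 h2 h3
  · split at hn <;> omega
  · split at hn <;> omega
  · split at hn <;> omega
  · have hrx : (x - M) % e < e := Nat.mod_lt _ (by omega)
    split at hn <;> omega

include he hM hn in
lemma mem_outS {v y : Fin n} :
    y ∈ outS M e par v ↔ own M e v.val (dist v y) par := by
  constructor
  · intro h
    obtain ⟨d, hd, rfl⟩ := Finset.mem_image.mp h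
    have hb := distSet_bounds he hM hn d hd
    have hn0 : 0 < n := Nat.lt_of_le_of_lt (Nat.zero_le _) v.isLt
    rw [dist_vadd v d (by omega)]
    exact mem_distSet.mp hd
  · intro h
    exact Finset.mem_image.mpr ⟨dist v y, mem_distSet.mpr h, vadd_dist v y⟩

include he hM hn in
lemma outS_card_eq {v : Fin n} :
    (outS M e par v).card = (distSet M e v.val par).card := by
  apply Finset.card_image_of_injOn
  intro d hd d' hd' hEq
  have hb := distSet_bounds he hM hn d hd
  have hb' := distSet_bounds he hM hn d' hd'
  have hn0 : 0 < n := Nat.lt_of_le_of_lt (Nat.zero_le _) v.isLt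
  have hvv : (v.val + d) % n = (v.val + d') % n := congrArg Fin.val hEq
  exact mod_add_inj (by omega) (by omega) hvv

include he heM hM in
lemma distSet_card_cases {x : ℕ} :
    ((distSet M e x par).card = M ∨ (distSet M e x par).card = M - e)
      ∧ e ∣ (distSet M e x par).card := by
  have hM9 : 9 ≤ M := by omega
  have hIcc1M : (Finset.Icc 1 M).card = M := by rw [Nat.card_Icc]; omega
  unfold distSet
  split_ifs with h1 h2 h3
  · rw [hIcc1M]; exact ⟨Or.inl rfl, heM⟩
  · rw [hIcc1M]; exact ⟨Or.inl rfl, heM⟩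
  · rw [Nat.card_Icc]
    have h9 : M - 1 + 1 - e = M - e := by omega
    rw [h9]
    exact ⟨Or.inr rfl, Nat.dvd_sub heM dvd_rfl⟩
  · have hrx : (x - M) % e < e := Nat.mod_lt _ (by omega)
    have hrx1 : 1 ≤ (x - M) % e := by omega
    have hnotmem : 2*M - (x - M) % e ∉ Finset.Icc 1 (M-1) := by
      rw [Finset.mem_Icc]
      omega
    rw [Finset.card_insert_of_notMem hnotmem, Nat.card_Icc]
    have h9 : M - 1 + 1 - 1 + 1 = M := by omega
    rw [h9]
    exact ⟨Or.inl rfl, heM⟩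

include he hM in
lemma Icc_subset_distSet {x : ℕ} : Finset.Icc e (M-1) ⊆ distSet M e x par := by
  intro d hd
  rw [Finset.mem_Icc] at hd
  rw [mem_distSet]
  unfold own
  have hM9 : 9 ≤ M := by omega
  split_ifs with h1 h2 h3
  · omega
  · omega
  · omega
  · right
    omega

include he hM hn in
lemma notMem_outS_self {v : Fin n} : v ∉ outS M e par v := by
  intro h
  rw [mem_outS he hM hn, dist_self] at h
  unfold own at h
  have hM9 : 9 ≤ M := by omega
  split_ifs at h with h1 h2 h3
  · omega
  · omega
  · omega
  · have hrx : (v.val - M) % e < e := Nat.mod_lt _ (by omega)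
    rcases h with h | h <;> omega

include he heM hM hn in
lemma outS_xor {x y : Fin n} (h : x ≠ y) :
    y ∈ outS M e par x ↔ ¬ x ∈ outS M e par y := by
  rw [mem_outS he hM hn, mem_outS he hM hn]
  have hd1 : 1 ≤ dist x y := dist_pos h
  have hdn : dist x y < n := dist_lt x y
  have hrev : dist y x = n - dist x y := dist_rev h
  have hyval : ((x.val + dist x y) % n) = y.val :=
    congrArg Fin.val (vadd_dist x y)
  have hgen := own_xor he heM hM hn x.val (dist x y) x.isLt hd1 hdn
  rw [hyval] at hgen
  rw [hrev]
  exact hgen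

end OutS



section Count

variable {n M e g : ℕ} {par : Bool}
variable (he : 3 ≤ e) (heM : e ∣ M) (hM : 3*e ≤ M)
  (hn : n = 2*M + (if par then 1 else 0))
  (hge : e ≤ g) (hbig : 12*(g+e+20) ≤ M)

include he heM hM hn hge hbig in
lemma count_parity {v : Fin n} {b : ℕ} (hb : b < 2) :
    M / 3 ≤ ((outS M e par v).filter (fun w => g ≤ w.val ∧ w.val % 2 = b)).card := by
  classical
  set a := v.val with ha
  have han : a < n := v.isLt
  have hn0 : 0 < n := by omega
  have hM9 : 9 ≤ M := by omega
  set d₁ := e + g + ((a + e + g + b) % 2) with hd₁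
  set T := ((outS M e par v).filter (fun w => g ≤ w.val ∧ w.val % 2 = b)) with hT
  have hmemT : ∀ d, e ≤ d → d ≤ M - 1 → g ≤ (vadd v d).val → (vadd v d).val % 2 = b →
      vadd v d ∈ T := by
    intro d h1 h2 h3 h4
    rw [hT, Finset.mem_filter]
    refine ⟨?_, h3, h4⟩
    exact Finset.mem_image_of_mem _ (Icc_subset_distSet he hM (Finset.mem_Icc.mpr ⟨h1, h2⟩))
  have hvadd_val_lo : ∀ d, a + d < n → (vadd v d).val = a + d := by
    intro d hd
    exact Nat.mod_eq_of_lt hd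
  have hvadd_val_hi : ∀ d, n ≤ a + d → a + d < 2*n → (vadd v d).val = a + d - n := by
    intro d hd1 hd2
    show (a + d) % n = a + d - n
    rw [Nat.mod_eq_sub_mod hd1]
    exact Nat.mod_eq_of_lt (by omega)
  have hinj : ∀ d0 c1, (∀ t, t < c1 → d0 + 2*t ≤ M - 1) →
      Set.InjOn (fun t => vadd v (d0 + 2*t)) (Finset.range c1) := by
    intro d0 c1 hc t ht t' ht' hEq
    rw [Finset.coe_range, Set.mem_Iio] at ht ht'
    have h1 : (a + (d0 + 2*t)) % n = (a + (d0 + 2*t')) % n := congrArg Fin.val hEq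
    have h2 := hc t ht
    have h3 := hc t' ht'
    have := mod_add_inj (n := n) (a := a) (d := d0 + 2*t) (d' := d0 + 2*t')
      (by split at hn <;> omega) (by split at hn <;> omega) h1
    omega
  rcases le_or_gt (a + M) n with hcase | hcase
  · -- no wrap
    set c₁ := (M + 1 - d₁) / 2 with hc₁
    have hsub : (Finset.range c₁).image (fun t => vadd v (d₁ + 2*t)) ⊆ T := by
      intro x hx
      obtain ⟨t, ht, rfl⟩ := Finset.mem_image.mp hx
      rw [Finset.mem_range] at ht
      have hdM : d₁ + 2*t ≤ M - 1 := by omega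
      have hval : (vadd v (d₁ + 2*t)).val = a + (d₁ + 2*t) :=
        hvadd_val_lo _ (by omega)
      apply hmemT _ (by omega) hdM
      · rw [hval]; omega
      · rw [hval]; omega
    have hcard : ((Finset.range c₁).image (fun t => vadd v (d₁ + 2*t))).card = c₁ := by
      rw [Finset.card_image_of_injOn (hinj d₁ c₁ (fun t ht => by omega))]
      exact Finset.card_range c₁
    have := Finset.card_le_card hsub
    omega
  · -- wrap
    set c₁ := (n + 1 - a - d₁) / 2 with hc₁
    set d₂ := (n - a + g) + ((g + b) % 2) with hd₂
    set c₂ := (M + 1 - d₂) / 2 with hc₂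
    set F₁ := (Finset.range c₁).image (fun t => vadd v (d₁ + 2*t)) with hF₁
    set F₂ := (Finset.range c₂).image (fun t => vadd v (d₂ + 2*t)) with hF₂
    have hsub₁ : F₁ ⊆ T ∧ ∀ x ∈ F₁, M ≤ x.val := by
      constructor <;> intro x hx <;>
        obtain ⟨t, ht, rfl⟩ := Finset.mem_image.mp hx <;>
        rw [Finset.mem_range] at ht
      all_goals
        have hdM : d₁ + 2*t ≤ n - 1 - a := by omega
        have hval : (vadd v (d₁ + 2*t)).val = a + (d₁ + 2*t) :=
          hvadd_val_lo _ (by omega)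
      · apply hmemT _ (by omega) (by split at hn <;> omega)
        · rw [hval]; omega
        · rw [hval]; omega
      · rw [hval]
        split at hn <;> omega
    have hsub₂ : F₂ ⊆ T ∧ ∀ x ∈ F₂, x.val < M := by
      constructor <;> intro x hx <;>
        obtain ⟨t, ht, rfl⟩ := Finset.mem_image.mp hx <;>
        rw [Finset.mem_range] at ht
      all_goals
        have hdM : d₂ + 2*t ≤ M - 1 := by omega
        have hval : (vadd v (d₂ + 2*t)).val = a + (d₂ + 2*t) - n :=
          hvadd_val_hi _ (by omega) (by omega)
      · apply hmemT _ (by omega) hdM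
        · rw [hval]; omega
        · rw [hval]; omega
      · rw [hval]; omega
    have hdisj : Disjoint F₁ F₂ := by
      rw [Finset.disjoint_left]
      intro x hx1 hx2
      have := hsub₁.2 x hx1
      have := hsub₂.2 x hx2
      omega
    have hcard₁ : F₁.card = c₁ := by
      rw [hF₁, Finset.card_image_of_injOn (hinj d₁ c₁ (fun t ht => by
        split at hn <;> omega))]
      exact Finset.card_range c₁
    have hcard₂ : F₂.card = c₂ := by
      rw [hF₂, Finset.card_image_of_injOn (hinj d₂ c₂ (fun t ht => by omega))]
      exact Finset.card_range c₂
    have hunion : F₁ ∪ F₂ ⊆ T := Finset.union_subset hsub₁.1 hsub₂.1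
    have hcardu : (F₁ ∪ F₂).card = c₁ + c₂ := by
      rw [Finset.card_union_of_disjoint hdisj, hcard₁, hcard₂]
    have := Finset.card_le_card hunion
    rw [hcardu] at this
    have hbound : M / 3 ≤ c₁ + c₂ := by
      split at hn <;> omega
    omega

end Count



lemma estar_ext {n e : ℕ} {S T : EStar n e} (h1 : S.centre = T.centre)
    (h2 : S.leaves = T.leaves) : S = T := by
  cases S; cases T; simp_all

theorem main_construction (n M e g k : ℕ) (par : Bool) (G : Gad e k)
    (hgg : G.g = g) (hk : 2 ≤ k) (he : 3 ≤ e) (heM : e ∣ M)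
    (hn : n = 2*M + (if par then 1 else 0)) (hge : e ≤ g)
    (hbig : 12*(g+e+20) ≤ M) :
    ∃ sys : EStarSystem n e, Chromatic sys k := by
  classical
  have hM : 3*e ≤ M := by omega
  have hgM : g < M := by omega
  have hn' : n = 2*M ∨ n = 2*M + 1 := by cases par <;> simp at hn <;> omega
  have hn0 : 0 < n := by omega
  have hMn : M < n := by omega
  have hk0 : 0 < k := by omega
  -- the k-colouring
  set cc : Fin n → Fin k := fun w =>
    if h : w.val < g then ⟨G.chi w.val, G.hchilt _⟩
    else ⟨w.val % 2, by omega⟩ with hcc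
  have hcc_lt : ∀ w : Fin n, w.val < g → cc w = ⟨G.chi w.val, G.hchilt _⟩ := by
    intro w hw
    rw [hcc]
    exact dif_pos hw
  have hcc_ge : ∀ w : Fin n, ¬ w.val < g → cc w = ⟨w.val % 2, by omega⟩ := by
    intro w hw
    rw [hcc]
    exact dif_neg hw
  -- embedding of gadget indices
  set castF : ℕ → Fin n := fun a2 => ⟨a2 % n, Nat.mod_lt _ hn0⟩ with hcastF
  have hcastF_val : ∀ a2, a2 < n → (castF a2).val = a2 := by
    intro a2 ha2
    simp [hcastF, Nat.mod_eq_of_lt ha2]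
  have hcast_inj : ∀ l l', l < n → l' < n → castF l = castF l' → l = l' := by
    intro l l' hl hl' hEq
    have := congrArg Fin.val hEq
    rwa [hcastF_val _ hl, hcastF_val _ hl'] at this
  set gparts : Fin n → Finset (Finset (Fin n)) := fun v =>
    (G.stars.filter (fun s => s.1 = v.val)).image (fun s => s.2.image castF) with hgparts
  have hmem_gparts : ∀ v q, q ∈ gparts v ↔
      ∃ s ∈ G.stars, s.1 = v.val ∧ q = s.2.image castF := by
    intro v q
    rw [hgparts]
    simp only [Finset.mem_image, Finset.mem_filter]
    constructor
    · rintro ⟨s, ⟨hs, hc⟩, rfl⟩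
      exact ⟨s, hs, hc, rfl⟩
    · rintro ⟨s, hs, hc, rfl⟩
      exact ⟨s, ⟨hs, hc⟩, rfl⟩
  -- basic facts about gadget parts
  have hleaf_lt : ∀ s, s ∈ G.stars → ∀ l ∈ s.2, l < n := by
    intro s hs l hl
    have := G.hbound s hs l hl
    omega
  have hgp_card : ∀ v q, q ∈ gparts v → q.card = e := by
    intro v q hq
    obtain ⟨s, hs, hc, rfl⟩ := (hmem_gparts v q).mp hq
    rw [Finset.card_image_of_injOn, G.hcard s hs]
    intro l hl l' hl' hEq
    exact hcast_inj l l' (hleaf_lt s hs l hl) (hleaf_lt s hs l' hl') hEq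
  have hgp_sub : ∀ v q, q ∈ gparts v → q ⊆ outS M e par v := by
    intro v q hq x hx
    obtain ⟨s, hs, hc, rfl⟩ := (hmem_gparts v q).mp hq
    obtain ⟨l, hl, rfl⟩ := Finset.mem_image.mp hx
    have hlg : l < g := by have := G.hbound s hs l hl; omega
    have hcl : s.1 < l := G.horder s hs l hl
    set d := l - v.val with hd
    have hd1 : 1 ≤ d := by omega
    have hdM : d ≤ M := by omega
    have hvM : v.val < M := by omega
    have hown : own M e v.val d par := by
      unfold own
      split_ifs <;> omega
    refine Finset.mem_image.mpr ⟨d, mem_distSet.mpr hown, ?_⟩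
    apply Fin.ext
    show (v.val + d) % n = l % n
    congr 1
    omega
  have hgp_mono : ∀ v q, q ∈ gparts v → ∃ w ∈ q, cc w ≠ cc v := by
    intro v q hq
    obtain ⟨s, hs, hc, rfl⟩ := (hmem_gparts v q).mp hq
    obtain ⟨l₀, hl₀, hlne⟩ := G.hchi s hs
    refine ⟨castF l₀, Finset.mem_image_of_mem _ hl₀, ?_⟩
    have hlg : l₀ < g := by have := G.hbound s hs l₀ hl₀; omega
    have hvg : v.val < g := by have := G.hcentre s hs; omega
    have hval : (castF l₀).val = l₀ := hcastF_val _ (by omega)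
    have h1 : cc (castF l₀) = ⟨G.chi l₀, G.hchilt _⟩ := by
      rw [hcc_lt _ (by rw [hval]; exact hlg)]
      exact Fin.ext (by rw [hval])
    have h2 : cc v = ⟨G.chi v.val, G.hchilt _⟩ := hcc_lt v hvg
    rw [h1, h2]
    intro hEq
    rw [Fin.mk.injEq] at hEq
    rw [hc] at hlne
    exact hlne hEq
  have hgp_disj : ∀ v, ∀ q ∈ gparts v, ∀ q' ∈ gparts v, q ≠ q' → Disjoint q q' := by
    intro v q hq q' hq' hne
    obtain ⟨s, hs, hc, rfl⟩ := (hmem_gparts v q).mp hq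
    obtain ⟨t, ht, hc', rfl⟩ := (hmem_gparts v q').mp hq'
    have hst : s ≠ t := by rintro rfl; exact hne rfl
    have hD := G.hdisj s hs t ht hst (by omega)
    rw [Finset.disjoint_left]
    intro x hx hx'
    obtain ⟨l, hl, rfl⟩ := Finset.mem_image.mp hx
    obtain ⟨l', hl', hEq⟩ := Finset.mem_image.mp hx'
    have : l' = l := hcast_inj l' l (hleaf_lt t ht l' hl') (hleaf_lt s hs l hl) hEq
    subst this
    exact (Finset.disjoint_left.mp hD hl) hl'
  have hgp_val_lt : ∀ v, ∀ q ∈ gparts v, ∀ x ∈ q, x.val < g := by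
    intro v q hq x hx
    obtain ⟨s, hs, hc, rfl⟩ := (hmem_gparts v q).mp hq
    obtain ⟨l, hl, rfl⟩ := Finset.mem_image.mp hx
    have hlg : l < g := by have := G.hbound s hs l hl; omega
    rw [hcastF_val _ (by omega)]
    exact hlg
  -- per-vertex partitions
  have hparts : ∀ v : Fin n, ∃ Pv : Finset (Finset (Fin n)),
      gparts v ⊆ Pv ∧
      (∀ p ∈ Pv, p.card = e ∧ p ⊆ outS M e par v ∧ ∃ w ∈ p, cc w ≠ cc v) ∧
      (∀ p ∈ Pv, ∀ q ∈ Pv, p ≠ q → Disjoint p q) ∧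
      Pv.biUnion id = outS M e par v := by
    intro v
    set U := (gparts v).biUnion id with hU
    have hUsub : U ⊆ outS M e par v := by
      intro x hx
      obtain ⟨q, hq, hxq⟩ := Finset.mem_biUnion.mp hx
      exact hgp_sub v q hq hxq
    have hUcard : U.card = ∑ q ∈ gparts v, q.card :=
      Finset.card_biUnion (fun q hq q' hq' hne => hgp_disj v q hq q' hq' hne)
    have hUdvd : e ∣ U.card := by
      rw [hUcard]
      apply Finset.dvd_sum
      intro q hq
      rw [hgp_card v q hq]
    set S := outS M e par v \ U with hS
    have hScard : S.card = (outS M e par v).card - U.card := Finset.card_sdiff_of_subset hUsub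
    have houtdvd : e ∣ (outS M e par v).card := by
      rw [outS_card_eq he hM hn]
      exact (distSet_card_cases he heM hM).2
    have houtle : (outS M e par v).card ≤ M := by
      rw [outS_card_eq he hM hn]
      rcases (distSet_card_cases he heM hM (x := v.val) (par := par)).1 with h | h <;> omega
    have hSdvd : e ∣ S.card := by
      rw [hScard]
      exact Nat.dvd_sub houtdvd hUdvd
    set B := S.card / e with hB
    have hSB : S.card = B * e := by
      rw [hB, Nat.div_mul_cancel hSdvd]
    have hBM : B ≤ M / 3 := by
      have h1 : S.card ≤ M := le_trans (Finset.card_le_card (Finset.sdiff_subset)) houtle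
      have h2 : B ≤ M / e := by
        rw [hB]
        exact Nat.div_le_div_right h1
      have h3 : M / e ≤ M / 3 := Nat.div_le_div_left he (by omega)
      omega
    set b : ℕ := if (cc v).val = 0 then 1 else 0 with hb
    have hbne : b ≠ (cc v).val := by
      rw [hb]; split_ifs with h <;> omega
    have hblt : b < 2 := by rw [hb]; split_ifs <;> omega
    set D := S.filter (fun w => cc w ≠ cc v) with hD
    have hTD : ((outS M e par v).filter (fun w => g ≤ w.val ∧ w.val % 2 = b)) ⊆ D := by
      intro w hw
      rw [Finset.mem_filter] at hw
      obtain ⟨hw1, hw2, hw3⟩ := hw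
      have hwU : w ∉ U := by
        intro hwU
        obtain ⟨q, hq, hxq⟩ := Finset.mem_biUnion.mp hwU
        have := hgp_val_lt v q hq w hxq
        omega
      rw [hD, Finset.mem_filter]
      refine ⟨Finset.mem_sdiff.mpr ⟨hw1, hwU⟩, ?_⟩
      have hccw : cc w = ⟨w.val % 2, by omega⟩ := hcc_ge w (by omega)
      intro hEq
      apply hbne
      rw [← hEq, hccw]
      exact hw3.symm
    have hBD : B ≤ D.card := by
      have := count_parity he heM hM hn hge hbig (v := v) hblt
      have h2 := Finset.card_le_card hTD
      omega
    have hDS : D ⊆ S := Finset.filter_subset _ _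
    obtain ⟨Pb, hPb1, hPb2, hPb3⟩ := chop e (by omega) B S D hSB hDS hBD
    have hPbS : ∀ p ∈ Pb, p ⊆ S := by
      intro p hp x hx
      rw [← hPb3]
      exact Finset.mem_biUnion.mpr ⟨p, hp, hx⟩
    refine ⟨gparts v ∪ Pb, Finset.subset_union_left, ?_, ?_, ?_⟩
    · intro p hp
      rcases Finset.mem_union.mp hp with hp | hp
      · exact ⟨hgp_card v p hp, hgp_sub v p hp, hgp_mono v p hp⟩
      · obtain ⟨h1, w, hw⟩ := hPb1 p hp
        rw [Finset.mem_inter] at hw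
        refine ⟨h1, fun x hx => Finset.mem_sdiff.mp (hPbS p hp hx) |>.1, ?_⟩
        refine ⟨w, hw.1, ?_⟩
        have := hw.2
        rw [hD, Finset.mem_filter] at this
        exact this.2
    · intro p hp q hq hne
      rcases Finset.mem_union.mp hp with hp | hp <;>
        rcases Finset.mem_union.mp hq with hq | hq
      · exact hgp_disj v p hp q hq hne
      · rw [Finset.disjoint_left]
        intro x hx hx'
        have h1 : x ∈ U := Finset.mem_biUnion.mpr ⟨p, hp, hx⟩
        have h2 := hPbS q hq hx'
        exact (Finset.mem_sdiff.mp h2).2 h1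
      · rw [Finset.disjoint_left]
        intro x hx hx'
        have h1 : x ∈ U := Finset.mem_biUnion.mpr ⟨q, hq, hx'⟩
        have h2 := hPbS p hp hx
        exact (Finset.mem_sdiff.mp h2).2 h1
      · exact hPb2 p hp q hq hne
    · have hbu : (gparts v ∪ Pb).biUnion id = (gparts v).biUnion id ∪ Pb.biUnion id := by
        ext x
        simp only [Finset.mem_biUnion, Finset.mem_union, id]
        constructor
        · rintro ⟨q, hq | hq, hx⟩
          · exact Or.inl ⟨q, hq, hx⟩
          · exact Or.inr ⟨q, hq, hx⟩
        · rintro (⟨q, hq, hx⟩ | ⟨q, hq, hx⟩)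
          · exact ⟨q, Or.inl hq, hx⟩
          · exact ⟨q, Or.inr hq, hx⟩
      rw [hbu, hPb3, ← hU, hS]
      exact Finset.union_sdiff_of_subset hUsub
  -- choose the partitions
  choose Pv hPv1 hPv2 hPv3 hPv4 using hparts
  have hvnotout : ∀ v : Fin n, v ∉ outS M e par v := fun v => notMem_outS_self he hM hn
  -- build the stars
  set stars : Finset (EStar n e) := Finset.univ.biUnion (fun v =>
    (Pv v).attach.image (fun p =>
      ⟨v, p.1, (hPv2 v p.1 p.2).1,
        fun hmem => hvnotout v ((hPv2 v p.1 p.2).2.1 hmem)⟩)) with hstars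
  have hmem_stars : ∀ S : EStar n e, S ∈ stars ↔ S.leaves ∈ Pv S.centre := by
    intro S
    rw [hstars, Finset.mem_biUnion]
    constructor
    · rintro ⟨v, _, hS⟩
      obtain ⟨p, hp, rfl⟩ := Finset.mem_image.mp hS
      exact p.2
    · intro h
      refine ⟨S.centre, Finset.mem_univ _, Finset.mem_image.mpr ⟨⟨S.leaves, h⟩, Finset.mem_attach _ _, ?_⟩⟩
      apply estar_ext <;> rfl
  -- partition property
  have hpartition : ∀ p : Sym2 (Fin n), ¬ p.IsDiag →
      ∃! S, S ∈ stars ∧ p ∈ EStar.edges S := by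
    have key : ∀ x y : Fin n, x ≠ y → y ∈ outS M e par x →
        ∃! S, S ∈ stars ∧ s(x, y) ∈ EStar.edges S := by
      intro x y hxy hyx
      obtain ⟨q, hq, hyq⟩ := Finset.mem_biUnion.mp ((hPv4 x) ▸ hyx)
      rw [id] at hyq
      have hq_card := (hPv2 x q hq).1
      have hq_sub := (hPv2 x q hq).2.1
      refine ⟨⟨x, q, hq_card, fun hmem => hvnotout x (hq_sub hmem)⟩, ⟨?_, ?_⟩, ?_⟩
      · rw [hmem_stars]
        exact hq
      · unfold EStar.edges
        exact Finset.mem_image_of_mem _ hyq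
      · rintro S' ⟨hS', hpS'⟩
        unfold EStar.edges at hpS'
        obtain ⟨a2, ha2, hEq⟩ := Finset.mem_image.mp hpS'
        rw [Sym2.eq_iff] at hEq
        have hSl := (hmem_stars S').mp hS'
        rcases hEq with ⟨hcx, hay⟩ | ⟨hcy, hax⟩
        · -- S'.centre = x, a2 = y
          subst hay
          have hql : S'.leaves = q := by
            by_contra hne
            have hdisj := hPv3 x S'.leaves (hcx ▸ hSl) q hq hne
            exact (Finset.disjoint_left.mp hdisj ha2) hyq
          apply estar_ext
          · exact hcx
          · exact hql
        · -- S'.centre = y, a2 = x : impossible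
          exfalso
          subst hax
          have hxout : a2 ∈ outS M e par S'.centre := (hPv2 _ _ hSl).2.1 ha2
          rw [hcy] at hxout
          exact (outS_xor he heM hM hn hxy).mp hyx hxout
    intro p hp
    induction p with
    | _ x y =>
      have hxy : x ≠ y := fun h => hp (by rw [h]; exact Sym2.mk_isDiag_iff.mpr rfl)
      rcases (em (y ∈ outS M e par x)) with hcase | hcase
      · exact key x y hxy hcase
      · have hyx : x ∈ outS M e par y := by
          by_contra hc
          exact hcase ((outS_xor he heM hM hn hxy).mpr hc)
        have := key y x (Ne.symm hxy) hyx
        rwa [Sym2.eq_swap] at this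
  refine ⟨⟨stars, hpartition⟩, ?_, ?_⟩
  · -- Colourable k
    refine ⟨cc, ?_⟩
    intro S hS
    have := (hmem_stars S).mp hS
    exact (hPv2 S.centre S.leaves this).2.2
  · -- not Colourable (k-1)
    rintro ⟨c', hc'⟩
    set cN : ℕ → ℕ := fun a2 => if h : a2 < n then (c' ⟨a2, h⟩).val else 0 with hcN
    have hcard : ((Finset.range g).image cN).card ≤ k - 1 := by
      have hsub : (Finset.range g).image cN ⊆ Finset.range (k-1) := by
        intro x hx
        obtain ⟨a2, ha2, rfl⟩ := Finset.mem_image.mp hx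
        rw [Finset.mem_range] at ha2
        rw [hcN]
        simp only [dif_pos (by omega : a2 < n)]
        exact Finset.mem_range.mpr (c' _).isLt
      calc ((Finset.range g).image cN).card ≤ (Finset.range (k-1)).card :=
            Finset.card_le_card hsub
        _ = k - 1 := Finset.card_range _
    obtain ⟨s₀, hs₀, hmono⟩ := G.force cN (hgg ▸ hcard)
    set v := castF s₀.1 with hv
    have hvval : v.val = s₀.1 := hcastF_val _ (by have := G.hcentre s₀ hs₀; omega)
    set q := s₀.2.image castF with hq
    have hq_gp : q ∈ gparts v := (hmem_gparts v q).mpr ⟨s₀, hs₀, hvval.symm, rfl⟩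
    have hq_Pv : q ∈ Pv v := hPv1 v hq_gp
    have hq_card := (hPv2 v q hq_Pv).1
    have hq_sub := (hPv2 v q hq_Pv).2.1
    set S₀ : EStar n e := ⟨v, q, hq_card, fun hmem => hvnotout v (hq_sub hmem)⟩ with hS₀
    have hS₀mem : S₀ ∈ stars := (hmem_stars S₀).mpr hq_Pv
    obtain ⟨a2, ha2, hne⟩ := hc' S₀ hS₀mem
    obtain ⟨l, hl, rfl⟩ := Finset.mem_image.mp ha2
    have hlval : (castF l).val = l := hcastF_val _ (hleaf_lt s₀ hs₀ l hl)
    apply hne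
    have h1 := hmono l hl
    rw [hcN] at h1
    simp only [dif_pos (show l < n from hleaf_lt s₀ hs₀ l hl),
      dif_pos (show s₀.1 < n by have := G.hcentre s₀ hs₀; omega)] at h1
    apply Fin.ext
    show (c' (castF l)).val = (c' v).val
    have hc1 : c' (castF l) = c' ⟨l, hleaf_lt s₀ hs₀ l hl⟩ := by
      congr 1
      exact Fin.ext hlval
    have hc2 : c' v = c' ⟨s₀.1, by have := G.hcentre s₀ hs₀; omega⟩ := by
      congr 1
      exact Fin.ext hvval
    rw [hc1, hc2, h1]

end Stmt13Aux

/-- For all `k ≥ 2` and `e ≥ 3` there is `n_k ≡ 0 (mod 2e)` such that `k`-chromatic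
`e`-star systems exist for all orders `n ≥ n_k` with `n ≡ 0,1 (mod 2e)`. -/
theorem stmt13 (k e : ℕ) (hk : 2 ≤ k) (he : 3 ≤ e) :
    ∃ nk : ℕ, nk % (2 * e) = 0 ∧
      ∀ n : ℕ, nk ≤ n → (n % (2 * e) = 0 ∨ n % (2 * e) = 1) →
        ∃ sys : EStarSystem n e, Chromatic sys k := by
  classical
  have he1 : 1 ≤ e := by omega
  obtain ⟨k2, rfl⟩ : ∃ k2, k = k2 + 2 := ⟨k - 2, by omega⟩
  set G : Stmt13Aux.Gad e (k2 + 2) := Stmt13Aux.buildGad e he1 (k2 + 1) with hG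
  set g := G.g with hg
  have hge : e ≤ g := G.hge (by omega)
  set X := 12*(g+e+20) with hX
  refine ⟨2*e*X, Nat.mul_mod_right _ _, ?_⟩
  intro n hnk hmod
  set q := n / (2*e) with hq
  set M := e * q with hM
  have h2e : 0 < 2*e := by omega
  have hdm := Nat.div_add_mod n (2*e)
  rw [← hq] at hdm
  have hqX : X ≤ q := by
    have h1 : (2*e*X) / (2*e) ≤ n / (2*e) := Nat.div_le_div_right hnk
    rwa [Nat.mul_div_cancel_left X h2e] at h1
  have hMq : q ≤ M := Nat.le_mul_of_pos_left q (by omega)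
  have hbig : 12*(g+e+20) ≤ M := by omega
  have heM : e ∣ M := Dvd.intro q rfl
  have h2M : 2*M = 2*e*q := by rw [hM]; ring
  rcases hmod with h0 | h1
  · refine Stmt13Aux.main_construction n M e g (k2+2) false G rfl (by omega) he heM
      ?_ hge hbig
    simp only [Bool.false_eq_true, if_false]
    omega
  · refine Stmt13Aux.main_construction n M e g (k2+2) true G rfl (by omega) he heM
      ?_ hge hbig
    simp only [if_true]
    omega
end

section
/- For every e >= 3, there exists an n ≡ 0 (mod 2e) and an e-star system of order n that is uniquely 2-chromatic with a strongly equitable 2-colouring: it admits a weak 2-colouring with both classes of size n/2, it admits no weak 1-colouring, and any two weak 2-colourings of the system differ only by a permutation of the two colours. -/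
open Finset

/-! ### Counting by parity -/

theorem card_filter_range_mod_two {r : ℕ} (hr : r < 2) (L : ℕ) :
    #{t ∈ range L | t % 2 = r} = (L + 1 - r) / 2 := by
  induction L with
  | zero => simp; omega
  | succ L ih =>
    rw [range_add_one, filter_insert]
    split_ifs with h
    · rw [card_insert_of_notMem (by simp), ih]; omega
    · rw [ih]; omega

theorem card_filter_Ico_mod_two {r : ℕ} (hr : r < 2) {a b : ℕ} (hab : a ≤ b) :
    #{t ∈ Ico a b | t % 2 = r} = (b + 1 - r) / 2 - (a + 1 - r) / 2 := by
  have hsplit : range b = range a ∪ Ico a b := by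
    rw [range_eq_Ico, range_eq_Ico, Ico_union_Ico_eq_Ico (Nat.zero_le a) hab]
  have hdisj : Disjoint (range a) (Ico a b) := by
    rw [range_eq_Ico]; exact Ico_disjoint_Ico_consecutive 0 a b
  have := card_filter_range_mod_two hr b
  rw [hsplit, filter_union, card_union_of_disjoint (disjoint_filter_filter hdisj),
    card_filter_range_mod_two hr] at this
  omega

theorem card_filter_Ico_mod_two_le {r : ℕ} (hr : r < 2) (a b : ℕ) :
    #{t ∈ Ico a b | t % 2 = r} ≤ (b - a + 1) / 2 := by
  rcases le_or_gt a b with hab | hba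
  · rw [card_filter_Ico_mod_two hr hab]; omega
  · simp [Ico_eq_empty_of_le hba.le]

theorem Fin.card_filter_univ_val {n : ℕ} (p : ℕ → Prop) [DecidablePred p] :
    #{v : Fin n | p v} = #{k ∈ range n | p k} := by
  rw [← card_map Fin.valEmbedding, ← Nat.Iio_eq_range, ← Fin.map_valEmbedding_univ, filter_map]
  rfl

def everyOther {n : ℕ} (a c : ℕ) : Finset (Fin n) :=
  {v | a ≤ v.val ∧ v.val < a + 2 * c ∧ v.val % 2 = a % 2}

theorem mem_everyOther {n a c : ℕ} {v : Fin n} :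
    v ∈ (everyOther a c : Finset (Fin n)) ↔
      a ≤ v.val ∧ v.val < a + 2 * c ∧ v.val % 2 = a % 2 := by
  simp [everyOther]

theorem card_everyOther {n a c : ℕ} (h : a + 2 * c ≤ n) :
    #(everyOther a c : Finset (Fin n)) = c := by
  rw [everyOther, Fin.card_filter_univ_val (fun k => a ≤ k ∧ k < a + 2 * c ∧ k % 2 = a % 2)]
  have : {k ∈ range n | a ≤ k ∧ k < a + 2 * c ∧ k % 2 = a % 2} =
      {k ∈ Ico a (a + 2 * c) | k % 2 = a % 2} := by
    ext k; simp only [mem_filter, mem_range, mem_Ico]; omega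
  rw [this, card_filter_Ico_mod_two (Nat.mod_lt _ two_pos) (by omega)]
  omega

/-! ### Partitions into blocks that each meet a given predicate -/

section Blocks

variable {α : Type*} [DecidableEq α] {e : ℕ} (p : α → Prop) [DecidablePred p]

theorem Finset.exists_block_of_card_filter_not_le (he : 0 < e) {r : ℕ} {s : Finset α}
    (hs : #s = e * (r + 1)) (hbad : #{z ∈ s | ¬ p z} ≤ (r + 1) * (e - 1)) :
    ∃ g ⊆ s, #g = e ∧ (∃ z ∈ g, p z) ∧ #{z ∈ s \ g | ¬ p z} ≤ r * (e - 1) := by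
  set t := min (e - 1) #{z ∈ s | ¬ p z}
  have hsplit := card_filter_add_card_filter_not (s := s) (fun z => ¬ p z)
  have hnum : (r + 1) * (e - 1) = r * (e - 1) + (e - 1) := by ring
  have hnum' : e * (r + 1) = r * (e - 1) + r + e := by
    obtain ⟨f, rfl⟩ : ∃ f, e = f + 1 := ⟨e - 1, by omega⟩
    simp only [Nat.add_sub_cancel]; ring
  obtain ⟨bad, hbad_sub, hbad_card⟩ :=
    exists_subset_card_eq (show t ≤ #{z ∈ s | ¬ p z} from min_le_right _ _)
  obtain ⟨good, hgood_sub, hgood_card⟩ :=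
    exists_subset_card_eq (show e - t ≤ #{z ∈ s | ¬¬ p z} by omega)
  have hdisj : Disjoint bad good := disjoint_left.mpr fun z hb hg =>
    (mem_filter.mp (hgood_sub hg)).2 (mem_filter.mp (hbad_sub hb)).2
  refine ⟨bad ∪ good, union_subset (hbad_sub.trans (filter_subset _ _))
    (hgood_sub.trans (filter_subset _ _)), ?_, ?_, ?_⟩
  · rw [card_union_of_disjoint hdisj]; omega
  · obtain ⟨z, hz⟩ := card_pos.mp (show 0 < #good by omega)
    exact ⟨z, mem_union_right _ hz, not_not.mp (mem_filter.mp (hgood_sub hz)).2⟩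
  · have hsub : {z ∈ s \ (bad ∪ good) | ¬ p z} ⊆ {z ∈ s | ¬ p z} \ bad := fun z => by
      simp only [mem_filter, mem_sdiff, mem_union]
      tauto
    have := card_le_card hsub
    rw [card_sdiff_of_subset hbad_sub] at this
    omega

theorem Finpartition.exists_extend_of_card_sdiff (he : 0 < e) {s u : Finset α}
    (P : Finpartition u) (hus : u ⊆ s) (hP : ∀ g ∈ P.parts, #g = e ∧ ∃ z ∈ g, p z) {r : ℕ}
    (hcard : #(s \ u) = e * r) (hbad : #{z ∈ s \ u | ¬ p z} ≤ r * (e - 1)) :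
    ∃ Q : Finpartition s, P.parts ⊆ Q.parts ∧ ∀ g ∈ Q.parts, #g = e ∧ ∃ z ∈ g, p z := by
  induction r generalizing u with
  | zero =>
    have hus' : u = s :=
      hus.antisymm (sdiff_eq_empty_iff_subset.mp (card_eq_zero.mp (by simpa using hcard)))
    exact ⟨P.copy hus', subset_rfl, hP⟩
  | succ r ih =>
    obtain ⟨g, hg, hge, ⟨z, hzg, hz⟩, hbad'⟩ :=
      exists_block_of_card_filter_not_le p he hcard hbad
    have hgu : Disjoint u g := disjoint_of_subset_right hg disjoint_sdiff
    obtain ⟨Q, hPQ, hQ⟩ := ih (P.extend (ne_empty_of_mem hzg) hgu rfl)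
      (union_subset hus (hg.trans sdiff_subset))
      (by simp only [Finpartition.extend_parts, mem_insert]
          rintro g' (rfl | hg'); exacts [⟨hge, z, hzg, hz⟩, hP g' hg'])
      (by rw [← sdiff_sdiff_left, card_sdiff_of_subset hg, hcard, hge, Nat.mul_succ,
        Nat.add_sub_cancel])
      (by rwa [← sdiff_sdiff_left])
    exact ⟨Q, (subset_insert _ _).trans hPQ, hQ⟩

theorem Finpartition.exists_superset_of_pairwiseDisjoint (he : 0 < e) {s : Finset α}
    (G : Finset (Finset α)) (hG : (G : Set (Finset α)).PairwiseDisjoint id)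
    (hGs : ∀ g ∈ G, g ⊆ s ∧ #g = e ∧ ∃ z ∈ g, p z) {r : ℕ} (hcard : #s = e * (#G + r))
    (hbad : #{z ∈ s | ¬ p z} ≤ r * (e - 1)) :
    ∃ Q : Finpartition s, G ⊆ Q.parts ∧ ∀ g ∈ Q.parts, #g = e ∧ ∃ z ∈ g, p z := by
  set P := Finpartition.ofPairwiseDisjoint G hG
  have hparts : P.parts = G := erase_eq_of_notMem fun h => by simpa using (hGs ⊥ h).2.2
  have hu : G.sup id ⊆ s := Finset.sup_le fun g hg => (hGs g hg).1
  have hucard : #(G.sup id) = e * #G := by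
    rw [← P.sum_card_parts, hparts, sum_const_nat fun g hg => (hGs g hg).2.1, mul_comm]
  obtain ⟨Q, hPQ, hQ⟩ := P.exists_extend_of_card_sdiff p he hu
    (fun g hg => (hGs g (hparts ▸ hg)).2) (r := r)
    (by rw [card_sdiff_of_subset hu, hucard, hcard, Nat.mul_add, Nat.add_sub_cancel_left])
    ((card_le_card (filter_subset_filter _ sdiff_subset)).trans hbad)
  exact ⟨Q, hparts ▸ hPQ, hQ⟩

theorem Finset.pairwiseDisjoint_pair {a b : Finset α} (h : Disjoint a b) :
    ((({a, b} : Finset (Finset α))) : Set (Finset α)).PairwiseDisjoint id := by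
  rw [coe_pair]
  exact Set.pairwise_pair.mpr fun _ => ⟨h, h.symm⟩

end Blocks

/-! ### Star systems from oriented complete graphs -/

theorem EStar.ext {n e : ℕ} {S T : EStar n e} (hc : S.centre = T.centre)
    (hl : S.leaves = T.leaves) : S = T := by
  cases S; cases T; cases hc; cases hl; rfl

theorem EStar.mk_mem_edges_iff {n e : ℕ} {S : EStar n e} {u v : Fin n} :
    s(u, v) ∈ S.edges ↔ (S.centre = u ∧ v ∈ S.leaves) ∨ (S.centre = v ∧ u ∈ S.leaves) := by
  simp only [EStar.edges, mem_image, Sym2.eq_iff]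
  constructor
  · rintro ⟨a, ha, ⟨rfl, rfl⟩ | ⟨rfl, rfl⟩⟩
    exacts [Or.inl ⟨rfl, ha⟩, Or.inr ⟨rfl, ha⟩]
  · rintro (⟨rfl, hv⟩ | ⟨rfl, hu⟩)
    exacts [⟨v, hv, Or.inl ⟨rfl, rfl⟩⟩, ⟨u, hu, Or.inr ⟨rfl, rfl⟩⟩]

theorem EStarSystem.not_colourable_one {n e : ℕ} (sys : EStarSystem n e) (hn : 2 ≤ n) :
    ¬ Colourable sys 1 := by
  rintro ⟨c, hc⟩
  have hne : ¬ (s((⟨0, by omega⟩ : Fin n), ⟨1, by omega⟩)).IsDiag := by simp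
  obtain ⟨S, ⟨hS, -⟩, -⟩ := sys.partition _ hne
  obtain ⟨a, -, ha⟩ := hc S hS
  exact ha (Subsingleton.elim _ _)

theorem Fin.eq_add_one_of_ne {a b : Fin 2} (h : a ≠ b) : a = b + 1 := by
  revert a b; decide

theorem Fin.add_one_add_one (a : Fin 2) : a + 1 + 1 = a := by
  revert a; decide

section Orientation

variable {n e : ℕ} {out : Fin n → Finset (Fin n)} (hirr : ∀ x, x ∉ out x)
  (P : ∀ x, Finpartition (out x)) (hP : ∀ x, ∀ g ∈ (P x).parts, #g = e)

def orientedStar {x : Fin n} {g : Finset (Fin n)} (hg : g ∈ (P x).parts) : EStar n e :=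
  ⟨x, g, hP x g hg, fun h => hirr x ((P x).le hg h)⟩

def orientedStars : Finset (EStar n e) :=
  univ.biUnion fun x => (P x).parts.attach.image fun g => orientedStar hirr P hP g.2

theorem mem_orientedStars {S : EStar n e} :
    S ∈ orientedStars hirr P hP ↔ S.leaves ∈ (P S.centre).parts := by
  simp only [orientedStars, mem_biUnion, mem_univ, true_and, mem_image, mem_attach]
  constructor
  · rintro ⟨x, g, rfl⟩
    exact g.2
  · intro h
    exact ⟨S.centre, ⟨S.leaves, h⟩, EStar.ext rfl rfl⟩

variable (hout : ∀ x y, x ≠ y → (y ∈ out x ↔ x ∉ out y))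
include hout

theorem existsUnique_orientedStar_of_mem {u v : Fin n} (hv : v ∈ out u) :
    ∃! S, S ∈ orientedStars hirr P hP ∧ s(u, v) ∈ S.edges := by
  have huv : u ≠ v := fun h => hirr u (h ▸ hv)
  obtain ⟨g, hg, hvg⟩ := (P u).exists_mem hv
  refine ⟨orientedStar hirr P hP hg, ⟨(mem_orientedStars hirr P hP).mpr hg,
    EStar.mk_mem_edges_iff.mpr (Or.inl ⟨rfl, hvg⟩)⟩, ?_⟩
  rintro S ⟨hS, hSuv⟩
  rw [mem_orientedStars] at hS
  rcases EStar.mk_mem_edges_iff.mp hSuv with ⟨rfl, hvS⟩ | ⟨rfl, huS⟩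
  · exact EStar.ext rfl ((P _).eq_of_mem_parts hS hg hvS hvg)
  · exact absurd ((P _).le hS huS) ((hout u _ huv).mp hv)

def EStarSystem.ofOrientation : EStarSystem n e where
  stars := orientedStars hirr P hP
  partition p hp := by
    induction p using Sym2.ind with
    | h u v =>
    have huv : u ≠ v := fun h => hp (by simp [h])
    by_cases hv : v ∈ out u
    · exact existsUnique_orientedStar_of_mem hirr P hP hout hv
    · rw [Sym2.eq_swap]
      exact existsUnique_orientedStar_of_mem hirr P hP hout
        (not_not.mp fun h => hv ((hout u v huv).mpr h))

theorem isWeakColouring_ofOrientation_iff {k : ℕ} (c : Fin n → Fin k) :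
    IsWeakColouring (EStarSystem.ofOrientation hirr P hP hout) c ↔
      ∀ x, ∀ g ∈ (P x).parts, ∃ a ∈ g, c a ≠ c x := by
  simp only [IsWeakColouring, EStarSystem.ofOrientation]
  constructor
  · intro h x g hg
    exact h (orientedStar hirr P hP hg) ((mem_orientedStars hirr P hP).mpr hg)
  · intro h S hS
    exact h S.centre S.leaves ((mem_orientedStars hirr P hP).mp hS)

theorem IsWeakColouring.eq_add_one_of_forall_eq {c : Fin n → Fin 2}
    (hc : IsWeakColouring (EStarSystem.ofOrientation hirr P hP hout) c) {x : Fin n}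
    {g : Finset (Fin n)} (hg : g ∈ (P x).parts) {γ : Fin 2} (hγ : ∀ a ∈ g, c a = γ) :
    c x = γ + 1 := by
  obtain ⟨a, ha, hax⟩ := (isWeakColouring_ofOrientation_iff hirr P hP hout c).mp hc x g hg
  exact Fin.eq_add_one_of_ne fun h => hax (by rw [hγ a ha, h])

end Orientation

/-- The arc `x → z` of a tournament on `{0, …, n - 1}`: for `x, z < n - 1` it is present iff
`(z - x) mod (n - 1)` is odd (a circulant tournament when `n - 1` is odd), and every other
vertex points to the sink `n - 1`. -/
def OddArc (n x z : ℕ) : Prop :=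
  x + 1 < n ∧ (z + 1 = n ∨ (x < z ∧ z + 1 < n ∧ z % 2 ≠ x % 2) ∨ (z < x ∧ z % 2 = x % 2))

instance (n x : ℕ) : DecidablePred (OddArc n x) := fun _ => by unfold OddArc; infer_instance

section OddArc

variable {n x z : ℕ}

theorem not_oddArc_self : ¬ OddArc n x x := by
  unfold OddArc; omega

theorem oddArc_iff_not_oddArc (hx : x < n) (hz : z < n) (hxz : x ≠ z) :
    OddArc n x z ↔ ¬ OddArc n z x := by
  unfold OddArc; omega

theorem card_filter_oddArc (hn : n % 2 = 0) (hx : x + 1 < n) :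
    #{z ∈ range n | OddArc n x z} = n / 2 := by
  have hsplit : {z ∈ range n | OddArc n x z} = insert (n - 1)
      ({z ∈ Ico (x + 1) (n - 1) | z % 2 = (x + 1) % 2} ∪ {z ∈ Ico 0 x | z % 2 = x % 2}) := by
    ext z
    simp only [mem_filter, mem_range, mem_insert, mem_union, mem_Ico]
    unfold OddArc
    omega
  have hdisj : Disjoint {z ∈ Ico (x + 1) (n - 1) | z % 2 = (x + 1) % 2}
      {z ∈ Ico 0 x | z % 2 = x % 2} := by
    rw [disjoint_left]
    intro z
    simp only [mem_filter, mem_Ico]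
    omega
  rw [hsplit, card_insert_of_notMem (by simp; omega), card_union_of_disjoint hdisj,
    card_filter_Ico_mod_two (Nat.mod_lt _ two_pos) (by omega),
    card_filter_Ico_mod_two (Nat.mod_lt _ two_pos) (by omega)]
  omega

theorem card_filter_Ico_oddArc_le (a b : ℕ) :
    #{z ∈ Ico a b | OddArc n x z} ≤ (b - a) / 2 + 2 := by
  have hsub : {z ∈ Ico a b | OddArc n x z} ⊆ insert (n - 1)
      ({z ∈ Ico (max a (x + 1)) b | z % 2 = (x + 1) % 2} ∪
        {z ∈ Ico a (min b x) | z % 2 = x % 2}) := by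
    intro z
    simp only [mem_filter, mem_insert, mem_union, mem_Ico]
    unfold OddArc
    omega
  have h1 := card_filter_Ico_mod_two_le (Nat.mod_lt (x + 1) two_pos) (max a (x + 1)) b
  have h2 := card_filter_Ico_mod_two_le (Nat.mod_lt x two_pos) a (min b x)
  have := (card_le_card hsub).trans ((card_insert_le _ _).trans
    (Nat.add_le_add_right (card_union_le _ _) 1))
  omega

end OddArc

/-! ### The construction -/

namespace ForcedSystem

variable (e : ℕ)

def seedCount : ℕ := (2 * e - 1).choose e

def classSize : ℕ := e * (4 * (seedCount e + 3))

abbrev Vertex : Type := Fin (2 * classSize e)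

def out (x : Vertex e) : Finset (Vertex e) := {z | OddArc (2 * classSize e) x z}

def classColouring (δ : Fin 2) (v : Vertex e) : Fin 2 :=
  if v.val < classSize e then δ else δ + 1

def lowOdd : Finset (Vertex e) := everyOther 1 e

def highEven : Finset (Vertex e) := everyOther (classSize e) e

def seedPool : Finset (Vertex e) := everyOther (classSize e + 1) (2 * e - 1)

def highOdd : Finset (Vertex e) := everyOther (classSize e + 4 * e - 1) e

def sinkGadget : Finset (Vertex e) :=
  {v | v.val + 1 = 2 * classSize e ∨ (2 ≤ v.val ∧ v.val < 2 * e ∧ v.val % 2 = 0)}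

def block (j : ℕ) : Finset (Vertex e) := everyOther (2 * (e * j)) e

def seeds : Finset (Finset (Vertex e)) := powersetCard e (seedPool e)

noncomputable def seedOf (j : ℕ) : Finset (Vertex e) :=
  if h : j < #(seeds e) then ((seeds e).equivFin.symm ⟨j, h⟩).1 else ∅

noncomputable def gadgets (x : Vertex e) : Finset (Finset (Vertex e)) :=
  if x.val < classSize e then
    if x.val % 2 = 1 then
      if x.val = 1 then {highEven e, sinkGadget e} else {highEven e}
    else if x.val / (2 * e) < seedCount e then {seedOf e (x.val / (2 * e)), highOdd e}
    else {highOdd e}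
  else if x.val + 1 = 2 * classSize e then ∅
  else if x.val % 2 = 1 then {lowOdd e}
  else (range (seedCount e)).image (block e)

def IsGadget (x : Vertex e) (g : Finset (Vertex e)) : Prop :=
  g ⊆ out e x ∧ #g = e ∧ ∃ z ∈ g, classColouring e 0 z ≠ classColouring e 0 x

variable {e}

theorem classSize_eq : classSize e = 4 * (e * seedCount e) + 12 * e := by
  unfold classSize; ring

theorem two_mul_add_le_classSize {j : ℕ} (hj : j < seedCount e) :
    2 * (e * j) + 2 * e ≤ classSize e := by
  have := Nat.mul_le_mul_left e (show j + 1 ≤ seedCount e from hj)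
  rw [Nat.mul_succ] at this
  rw [classSize_eq]
  omega

theorem classSize_div_two_add_two_le (he : 3 ≤ e) {g : ℕ} (hg : g ≤ seedCount e + 2) :
    classSize e / 2 + 2 ≤ (4 * (seedCount e + 3) - g) * (e - 1) := by
  obtain ⟨f, rfl⟩ : ∃ f, e = f + 3 := ⟨e - 3, by omega⟩
  have hr : 3 * seedCount (f + 3) + 10 ≤ 4 * (seedCount (f + 3) + 3) - g := by omega
  have hhalf : classSize (f + 3) / 2 = 2 * ((f + 3) * seedCount (f + 3)) + 6 * (f + 3) := by
    rw [classSize_eq]; omega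
  rw [hhalf, show f + 3 - 1 = f + 2 by omega]
  nlinarith

theorem mem_out {x z : Vertex e} : z ∈ out e x ↔ OddArc (2 * classSize e) x z := by
  simp [out]

theorem not_mem_out_self (x : Vertex e) : x ∉ out e x := by
  rw [mem_out]; exact not_oddArc_self

theorem mem_out_iff_not_mem_out {x z : Vertex e} (hxz : x ≠ z) :
    z ∈ out e x ↔ x ∉ out e z := by
  rw [mem_out, mem_out]
  exact oddArc_iff_not_oddArc x.2 z.2 (Fin.val_ne_of_ne hxz)

theorem card_out {x : Vertex e} (hx : x.val + 1 < 2 * classSize e) :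
    #(out e x) = classSize e := by
  rw [out, Fin.card_filter_univ_val (OddArc (2 * classSize e) x),
    card_filter_oddArc (by omega) hx]
  omega

theorem out_eq_empty {x : Vertex e} (hx : ¬ x.val + 1 < 2 * classSize e) : out e x = ∅ := by
  ext z; rw [mem_out]; simp only [notMem_empty, iff_false]; unfold OddArc; omega

theorem classColouring_ne_iff {δ : Fin 2} {v w : Vertex e} :
    classColouring e δ v ≠ classColouring e δ w ↔
      (v.val < classSize e ↔ ¬ w.val < classSize e) := by
  have hδ : δ + 1 ≠ δ := by revert δ; decide
  unfold classColouring
  split_ifs <;> simp_all [Ne.symm hδ]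

theorem card_filter_out_same_class_le (x : Vertex e) :
    #{z ∈ out e x | ¬ classColouring e 0 z ≠ classColouring e 0 x} ≤ classSize e / 2 + 2 := by
  have hcount : #{z ∈ out e x | ¬ classColouring e 0 z ≠ classColouring e 0 x} =
      #{k ∈ range (2 * classSize e) |
        OddArc (2 * classSize e) x k ∧ (k < classSize e ↔ x.val < classSize e)} := by
    rw [out, filter_filter, ← Fin.card_filter_univ_val]
    congr 1
    ext z
    simp only [mem_filter, mem_univ, true_and, classColouring_ne_iff]
    tauto
  rw [hcount]
  by_cases hx : x.val < classSize e
  · refine (card_le_card fun k => ?_).trans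
      (card_filter_Ico_oddArc_le (n := 2 * classSize e) (x := x.val) 0 (classSize e))
    simp only [mem_filter, mem_range, mem_Ico]
    exact fun ⟨_, harc, hk⟩ => ⟨⟨k.zero_le, hk.mpr hx⟩, harc⟩
  · refine (card_le_card fun k => ?_).trans
      ((card_filter_Ico_oddArc_le (n := 2 * classSize e) (x := x.val) (classSize e)
        (2 * classSize e)).trans (by omega))
    simp only [mem_filter, mem_range, mem_Ico]
    exact fun ⟨hk2, harc, hk⟩ => ⟨⟨not_lt.mp (mt hk.mp hx), hk2⟩, harc⟩

theorem isGadget_everyOther (he : 0 < e) {x : Vertex e} {a : ℕ}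
    (ha : a + 2 * e ≤ 2 * classSize e)
    (harc : ∀ v, a ≤ v → v < a + 2 * e → v % 2 = a % 2 → OddArc (2 * classSize e) x v)
    (hclass : a < classSize e ↔ ¬ x.val < classSize e) : IsGadget e x (everyOther a e) := by
  refine ⟨fun v hv => ?_, card_everyOther ha, ⟨a, by omega⟩, ?_, classColouring_ne_iff.mpr hclass⟩
  · obtain ⟨h1, h2, h3⟩ := mem_everyOther.mp hv
    exact mem_out.mpr (harc v h1 h2 h3)
  · exact mem_everyOther.mpr ⟨le_rfl, show a < a + 2 * e by omega, rfl⟩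

theorem isGadget_highEven (he : 0 < e) {x : Vertex e} (hx : x.val < classSize e)
    (hodd : x.val % 2 = 1) : IsGadget e x (highEven e) := by
  have := classSize_eq (e := e)
  refine isGadget_everyOther he (by omega) (fun v _ _ _ => ?_) (by omega)
  unfold OddArc; omega

theorem isGadget_highOdd (he : 0 < e) {x : Vertex e} (hx : x.val < classSize e)
    (heven : x.val % 2 = 0) : IsGadget e x (highOdd e) := by
  have := classSize_eq (e := e)
  refine isGadget_everyOther he (by omega) (fun v _ _ _ => ?_) (by omega)
  unfold OddArc; omega

theorem isGadget_lowOdd (he : 0 < e) {x : Vertex e} (hx : classSize e ≤ x.val)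
    (hsink : x.val + 1 < 2 * classSize e) (hodd : x.val % 2 = 1) : IsGadget e x (lowOdd e) := by
  have := classSize_eq (e := e)
  refine isGadget_everyOther he (by omega) (fun v _ _ _ => ?_) (by omega)
  unfold OddArc; omega

theorem isGadget_block (he : 0 < e) {x : Vertex e} (hx : classSize e ≤ x.val)
    (heven : x.val % 2 = 0) {j : ℕ} (hj : j < seedCount e) : IsGadget e x (block e j) := by
  have := two_mul_add_le_classSize hj
  refine isGadget_everyOther he (by omega) (fun v _ _ _ => ?_) (by omega)
  unfold OddArc; omega

theorem card_seedPool (he : 0 < e) : #(seedPool e) = 2 * e - 1 := by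
  have := classSize_eq (e := e)
  exact card_everyOther (by omega)

theorem card_seeds (he : 0 < e) : #(seeds e) = seedCount e := by
  rw [seeds, card_powersetCard, card_seedPool he]; rfl

theorem seedOf_mem_seeds (he : 0 < e) {j : ℕ} (hj : j < seedCount e) :
    seedOf e j ∈ seeds e := by
  rw [← card_seeds he] at hj
  rw [seedOf, dif_pos hj]
  exact Subtype.prop _

theorem exists_seedOf_eq (he : 0 < e) {V : Finset (Vertex e)} (hV : V ∈ seeds e) :
    ∃ j < seedCount e, seedOf e j = V := by
  set i := (seeds e).equivFin ⟨V, hV⟩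
  refine ⟨i, card_seeds he ▸ i.2, ?_⟩
  rw [seedOf, dif_pos i.2, Fin.eta, Equiv.symm_apply_apply]

theorem isGadget_seedOf (he : 0 < e) {x : Vertex e} (hx : x.val < classSize e)
    (heven : x.val % 2 = 0) {j : ℕ} (hj : j < seedCount e) : IsGadget e x (seedOf e j) := by
  have := classSize_eq (e := e)
  obtain ⟨hsub, hcard⟩ := mem_powersetCard.mp (seedOf_mem_seeds he hj)
  obtain ⟨z, hz⟩ := card_pos.mp (show 0 < #(seedOf e j) by omega)
  have hpool (v : Vertex e) (hv : v ∈ seedPool e) :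
      classSize e < v.val ∧ v.val < classSize e + 4 * e - 1 ∧ v.val % 2 = 1 := by
    have := mem_everyOther.mp hv
    omega
  refine ⟨fun v hv => ?_, hcard, z, hz, classColouring_ne_iff.mpr ?_⟩
  · have := hpool v (hsub hv)
    rw [mem_out]; unfold OddArc; omega
  · have := hpool z (hsub hz)
    omega

theorem mem_sinkGadget {v : Vertex e} :
    v ∈ sinkGadget e ↔
      v.val + 1 = 2 * classSize e ∨ (2 ≤ v.val ∧ v.val < 2 * e ∧ v.val % 2 = 0) := by
  simp [sinkGadget]

theorem card_sinkGadget (he : 0 < e) : #(sinkGadget e) = e := by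
  have := classSize_eq (e := e)
  rw [sinkGadget, Fin.card_filter_univ_val
    (fun k => k + 1 = 2 * classSize e ∨ (2 ≤ k ∧ k < 2 * e ∧ k % 2 = 0))]
  have : {k ∈ range (2 * classSize e) |
      k + 1 = 2 * classSize e ∨ (2 ≤ k ∧ k < 2 * e ∧ k % 2 = 0)} =
      insert (2 * classSize e - 1) {k ∈ Ico 2 (2 * e) | k % 2 = 0} := by
    ext k; simp only [mem_filter, mem_range, mem_insert, mem_Ico]; omega
  rw [this, card_insert_of_notMem (by simp; omega), card_filter_Ico_mod_two two_pos (by omega)]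
  omega

theorem isGadget_sinkGadget (he : 0 < e) {x : Vertex e} (hx : x.val = 1) :
    IsGadget e x (sinkGadget e) := by
  have := classSize_eq (e := e)
  refine ⟨fun v hv => ?_, card_sinkGadget he, ⟨2 * classSize e - 1, by omega⟩,
    mem_sinkGadget.mpr (Or.inl (by simp; omega)), classColouring_ne_iff.mpr (by simp; omega)⟩
  have := mem_sinkGadget.mp hv
  rw [mem_out]; unfold OddArc; omega

theorem disjoint_highEven_sinkGadget : Disjoint (highEven e) (sinkGadget e) := by
  have := classSize_eq (e := e)
  refine disjoint_left.mpr fun v hv hv' => ?_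
  have := mem_everyOther.mp hv
  have := mem_sinkGadget.mp hv'
  omega

theorem disjoint_seedOf_highOdd (he : 0 < e) {j : ℕ} (hj : j < seedCount e) :
    Disjoint (seedOf e j) (highOdd e) := by
  refine disjoint_left.mpr fun v hv hv' => ?_
  have := mem_everyOther.mp ((mem_powersetCard.mp (seedOf_mem_seeds he hj)).1 hv)
  have := mem_everyOther.mp hv'
  omega

theorem mem_block_iff (he : 0 < e) {j : ℕ} {v : Vertex e} :
    v ∈ block e j ↔ v.val % 2 = 0 ∧ v.val / (2 * e) = j := by
  rw [block, mem_everyOther, Nat.div_eq_iff (by omega), show j * (2 * e) = 2 * (e * j) by ring]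
  omega

theorem pairwiseDisjoint_image_block (he : 0 < e) (s : Finset ℕ) :
    ((s.image (block e) : Finset (Finset (Vertex e))) : Set (Finset (Vertex e))).PairwiseDisjoint
      id := by
  intro g hg g' hg' hne
  obtain ⟨j, -, rfl⟩ := mem_image.mp hg
  obtain ⟨j', -, rfl⟩ := mem_image.mp hg'
  refine disjoint_left.mpr fun v hv hv' => hne ?_
  rw [← ((mem_block_iff he).mp hv).2, ((mem_block_iff he).mp hv').2]

theorem gadgets_spec (he : 0 < e) (x : Vertex e) :
    (gadgets e x : Set (Finset (Vertex e))).PairwiseDisjoint id ∧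
      ∀ g ∈ gadgets e x, IsGadget e x g := by
  unfold gadgets
  split_ifs with hlow hodd hone hseed hsink hodd'
  · refine ⟨pairwiseDisjoint_pair disjoint_highEven_sinkGadget, ?_⟩
    simp only [mem_insert, mem_singleton, forall_eq_or_imp, forall_eq]
    exact ⟨isGadget_highEven he hlow hodd, isGadget_sinkGadget he hone⟩
  · simpa using isGadget_highEven he hlow hodd
  · refine ⟨pairwiseDisjoint_pair (disjoint_seedOf_highOdd he hseed), ?_⟩
    simp only [mem_insert, mem_singleton, forall_eq_or_imp, forall_eq]
    exact ⟨isGadget_seedOf he hlow (by omega) hseed, isGadget_highOdd he hlow (by omega)⟩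
  · simpa using isGadget_highOdd he hlow (by omega)
  · simp
  · simpa using isGadget_lowOdd he (by omega) (by omega) hodd'
  · refine ⟨pairwiseDisjoint_image_block he _, ?_⟩
    simp only [forall_mem_image, mem_range]
    exact fun j hj => isGadget_block he (by omega) (by omega) hj

theorem card_gadgets_le (x : Vertex e) : #(gadgets e x) ≤ seedCount e + 2 := by
  unfold gadgets
  split_ifs <;> first
    | exact (card_insert_le _ _).trans (by simp)
    | simp
    | exact card_image_le.trans (by simp)

theorem highEven_mem_gadgets {x : Vertex e} (hx : x.val < classSize e) (hodd : x.val % 2 = 1) :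
    highEven e ∈ gadgets e x := by
  unfold gadgets; split_ifs <;> simp_all

theorem sinkGadget_mem_gadgets {x : Vertex e} (hx : x.val < classSize e) (hone : x.val = 1) :
    sinkGadget e ∈ gadgets e x := by
  unfold gadgets; split_ifs <;> simp_all

theorem seedOf_mem_gadgets {x : Vertex e} (hx : x.val < classSize e) (heven : x.val % 2 = 0)
    (hseed : x.val / (2 * e) < seedCount e) : seedOf e (x.val / (2 * e)) ∈ gadgets e x := by
  unfold gadgets; split_ifs <;> simp_all

theorem highOdd_mem_gadgets {x : Vertex e} (hx : x.val < classSize e) (heven : x.val % 2 = 0) :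
    highOdd e ∈ gadgets e x := by
  unfold gadgets; split_ifs <;> simp_all

theorem lowOdd_mem_gadgets {x : Vertex e} (hx : classSize e ≤ x.val)
    (hsink : x.val + 1 < 2 * classSize e) (hodd : x.val % 2 = 1) : lowOdd e ∈ gadgets e x := by
  unfold gadgets
  rw [if_neg (by omega), if_neg hsink.ne, if_pos hodd]
  exact mem_singleton_self _

theorem block_mem_gadgets {x : Vertex e} (hx : classSize e ≤ x.val) (heven : x.val % 2 = 0)
    {j : ℕ} (hj : j < seedCount e) : block e j ∈ gadgets e x := by
  unfold gadgets
  rw [if_neg (by omega), if_neg (by omega), if_neg (by omega)]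
  exact mem_image_of_mem _ (mem_range.mpr hj)

theorem exists_finpartition_out (he : 3 ≤ e) (x : Vertex e) :
    ∃ P : Finpartition (out e x), gadgets e x ⊆ P.parts ∧
      ∀ g ∈ P.parts, #g = e ∧ ∃ z ∈ g, classColouring e 0 z ≠ classColouring e 0 x := by
  obtain ⟨hdisj, hgad⟩ := gadgets_spec (by omega) x
  by_cases hx : x.val + 1 < 2 * classSize e
  · have hG := card_gadgets_le x
    refine Finpartition.exists_superset_of_pairwiseDisjoint _ (by omega) _ hdisj hgad
      (r := 4 * (seedCount e + 3) - #(gadgets e x)) ?_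
      ((card_filter_out_same_class_le x).trans (classSize_div_two_add_two_le he hG))
    rw [card_out hx, Nat.add_sub_cancel' (by omega), classSize]
  · have hG : gadgets e x = ∅ := eq_empty_of_forall_notMem fun g hg => by
      obtain ⟨hsub, hcard, -⟩ := hgad g hg
      rw [out_eq_empty hx, subset_empty] at hsub
      simp [hsub] at hcard; omega
    exact Finpartition.exists_superset_of_pairwiseDisjoint _ (by omega) _ hdisj hgad
      (r := 0) (by simp [out_eq_empty hx, hG]) (by simp [out_eq_empty hx])

noncomputable def parts (he : 3 ≤ e) (x : Vertex e) : Finpartition (out e x) :=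
  (exists_finpartition_out he x).choose

theorem gadgets_subset_parts (he : 3 ≤ e) (x : Vertex e) :
    gadgets e x ⊆ (parts he x).parts :=
  (exists_finpartition_out he x).choose_spec.1

theorem card_and_exists_ne_of_mem_parts (he : 3 ≤ e) {x : Vertex e} {g : Finset (Vertex e)}
    (hg : g ∈ (parts he x).parts) :
    #g = e ∧ ∃ z ∈ g, classColouring e 0 z ≠ classColouring e 0 x :=
  (exists_finpartition_out he x).choose_spec.2 g hg

noncomputable def system (he : 3 ≤ e) : EStarSystem (2 * classSize e) e :=
  EStarSystem.ofOrientation not_mem_out_self (parts he)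
    (fun _ _ hg => (card_and_exists_ne_of_mem_parts he hg).1)
    (fun _ _ hxy => mem_out_iff_not_mem_out hxy)

theorem isWeakColouring_classColouring (he : 3 ≤ e) :
    IsWeakColouring (system he) (classColouring e 0) :=
  (isWeakColouring_ofOrientation_iff _ _ _ _ _).mpr fun _ _ hg =>
    (card_and_exists_ne_of_mem_parts he hg).2

theorem classCard_classColouring (i : Fin 2) :
    classCard (classColouring e 0) i = 2 * classSize e / 2 := by
  have hlow : #{v : Vertex e | v.val < classSize e} = classSize e := by
    rw [Fin.card_filter_val_lt]; omega
  have hsplit := card_filter_add_card_filter_not (s := (univ : Finset (Vertex e)))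
    (fun v => v.val < classSize e)
  rw [card_univ, Fintype.card_fin, hlow] at hsplit
  fin_cases i
  · rw [show 2 * classSize e / 2 = #{v : Vertex e | v.val < classSize e} by omega, classCard]
    congr 1; ext v; simp [classColouring]
  · rw [show 2 * classSize e / 2 = #{v : Vertex e | ¬ v.val < classSize e} by omega, classCard]
    congr 1; ext v; simp [classColouring]

section Forcing

variable (he : 3 ≤ e) {c : Vertex e → Fin 2} (hc : IsWeakColouring (system he) c)
include hc

theorem colour_eq_add_one_of_mem_gadgets {x : Vertex e} {g : Finset (Vertex e)}
    (hg : g ∈ gadgets e x) {γ : Fin 2} (hγ : ∀ a ∈ g, c a = γ) : c x = γ + 1 :=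
  IsWeakColouring.eq_add_one_of_forall_eq _ _ _ _ hc (gadgets_subset_parts he x hg) hγ

theorem exists_monochromatic_block :
    ∃ α : Fin 2, ∃ j < seedCount e, ∀ z ∈ block e j, c z = α := by
  have he0 : 0 < e := by omega
  obtain ⟨β, -, hβ⟩ := exists_lt_card_fiber_of_mul_lt_card_of_maps_to (s := seedPool e)
    (t := univ) (f := c) (n := e - 1) (fun _ _ => mem_univ _)
    (by rw [card_univ, Fintype.card_fin, card_seedPool he0]; omega)
  obtain ⟨V, hVsub, hVcard⟩ := exists_subset_card_eq (s := {z ∈ seedPool e | c z = β})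
    (show e ≤ _ by omega)
  obtain ⟨j, hj, rfl⟩ := exists_seedOf_eq he0
    (mem_powersetCard.mpr ⟨hVsub.trans (filter_subset _ _), hVcard⟩)
  refine ⟨β + 1, j, hj, fun z hz => ?_⟩
  obtain ⟨hz2, hzj⟩ := (mem_block_iff he0).mp hz
  have hzlow : z.val < classSize e := by
    have := mem_everyOther.mp hz
    have := two_mul_add_le_classSize hj
    omega
  have hmem := seedOf_mem_gadgets hzlow hz2 (hzj ▸ hj)
  rw [hzj] at hmem
  exact colour_eq_add_one_of_mem_gadgets he hc hmem fun a ha => (mem_filter.mp (hVsub ha)).2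

theorem eq_classColouring_of_block {α : Fin 2} {j : ℕ} (hj : j < seedCount e)
    (hblock : ∀ z ∈ block e j, c z = α) : c = classColouring e α := by
  have := classSize_eq (e := e)
  have hhighEven (x : Vertex e) (h₁ : classSize e ≤ x.val) (h₂ : x.val % 2 = 0) :
      c x = α + 1 :=
    colour_eq_add_one_of_mem_gadgets he hc (block_mem_gadgets h₁ h₂ hj) hblock
  have hlowOdd (x : Vertex e) (h₁ : x.val < classSize e) (h₂ : x.val % 2 = 1) : c x = α := by
    rw [← Fin.add_one_add_one α]
    refine colour_eq_add_one_of_mem_gadgets he hc (highEven_mem_gadgets h₁ h₂) fun a ha => ?_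
    have := mem_everyOther.mp ha
    exact hhighEven a (by omega) (by omega)
  have hhighOdd (x : Vertex e) (h₁ : classSize e ≤ x.val) (h₂ : x.val + 1 < 2 * classSize e)
      (h₃ : x.val % 2 = 1) : c x = α + 1 := by
    refine colour_eq_add_one_of_mem_gadgets he hc (lowOdd_mem_gadgets h₁ h₂ h₃) fun a ha => ?_
    have := mem_everyOther.mp ha
    exact hlowOdd a (by omega) (by omega)
  have hlowEven (x : Vertex e) (h₁ : x.val < classSize e) (h₂ : x.val % 2 = 0) : c x = α := by
    rw [← Fin.add_one_add_one α]
    refine colour_eq_add_one_of_mem_gadgets he hc (highOdd_mem_gadgets h₁ h₂) fun a ha => ?_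
    have := mem_everyOther.mp ha
    exact hhighOdd a (by omega) (by omega) (by omega)
  -- The star at vertex `1` with leaves `sinkGadget e` is monochromatic but for the sink.
  have hsink (x : Vertex e) (hx : x.val + 1 = 2 * classSize e) : c x = α + 1 := by
    let one : Vertex e := ⟨1, by omega⟩
    obtain ⟨a, ha, hne⟩ := (isWeakColouring_ofOrientation_iff _ _ _ _ c).mp hc one _
      (gadgets_subset_parts he one (sinkGadget_mem_gadgets (show 1 < classSize e by omega) rfl))
    rw [hlowOdd one (show 1 < classSize e by omega) rfl] at hne
    rcases mem_sinkGadget.mp ha with ha' | ⟨-, h₂, h₃⟩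
    · rw [show x = a from Fin.ext (by omega)]
      exact Fin.eq_add_one_of_ne hne
    · exact absurd (hlowEven a (by omega) h₃) hne
  funext v
  unfold classColouring
  split_ifs with hv
  · rcases Nat.mod_two_eq_zero_or_one v.val with h | h
    exacts [hlowEven v hv h, hlowOdd v hv h]
  · by_cases hs : v.val + 1 = 2 * classSize e
    · exact hsink v hs
    rcases Nat.mod_two_eq_zero_or_one v.val with h | h
    exacts [hhighEven v (by omega) h, hhighOdd v (by omega) (by omega) h]

theorem exists_eq_classColouring : ∃ α, c = classColouring e α := by
  obtain ⟨α, j, hj, hblock⟩ := exists_monochromatic_block he hc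
  exact ⟨α, eq_classColouring_of_block he hc hj hblock⟩

end Forcing

theorem uniquelyColourable_system (he : 3 ≤ e) : UniquelyColourable (system he) 2 := by
  intro c₁ c₂ h₁ h₂
  obtain ⟨α₁, rfl⟩ := exists_eq_classColouring he h₁
  obtain ⟨α₂, rfl⟩ := exists_eq_classColouring he h₂
  refine ⟨Equiv.addRight (α₂ - α₁), funext fun v => ?_⟩
  simp only [Function.comp_apply, Equiv.coe_addRight, classColouring]
  split_ifs <;> abel

end ForcedSystem

/-- For every `e ≥ 3` there is a strongly equitable uniquely 2-chromatic `e`-star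
system of some order `n ≡ 0 (mod 2e)`. -/
theorem stmt14 (e : ℕ) (he : 3 ≤ e) :
    ∃ n : ℕ, n % (2 * e) = 0 ∧
      ∃ sys : EStarSystem n e,
        (∃ c : Fin n → Fin 2, IsWeakColouring sys c ∧
          ∀ i : Fin 2, classCard c i = n / 2) ∧
        ¬ Colourable sys 1 ∧
        UniquelyColourable sys 2 := by
  open ForcedSystem in
  refine ⟨2 * classSize e, ?_, system he,
    ⟨classColouring e 0, isWeakColouring_classColouring he, classCard_classColouring⟩,
    (system he).not_colourable_one ?_, uniquelyColourable_system he⟩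
  · rw [classSize, ← mul_assoc]
    exact Nat.mul_mod_right _ _
  · have := classSize_eq (e := e)
    omega
end

section
/- Let e >= 3 and let (V, B) be a strongly equitable uniquely 2-chromatic e-star system of order n_0 ≡ 0 (mod 2e) whose two colour classes each have size n_0/2 > e. Then for every n > n_0 with n ≡ 0 or 1 (mod 2e), there exists a uniquely 2-chromatic e-star system of order n. -/
lemma exists_blocks {α : Type*} [DecidableEq α] (e : ℕ) (he : 1 ≤ e) :
    ∀ (k : ℕ), 1 ≤ k → ∀ (A B : Finset α), Disjoint A B →
      A.card + B.card = e * k → e + (k - 1) ≤ B.card →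
      ∃ P : Finset (Finset α), P.card = k ∧
        (∀ b ∈ P, b.card = e ∧ b ⊆ A ∪ B ∧ (b ∩ B).Nonempty) ∧
        (∃ b₀ ∈ P, b₀ ⊆ B) ∧
        (∀ x ∈ A ∪ B, ∃! b, b ∈ P ∧ x ∈ b) := by
  intro k
  induction k with
  | zero => omega
  | succ k ih =>
    intro _ A B hdisj hcard hB
    have hcard' : A.card + B.card = e * k + e := by rw [Nat.mul_succ] at hcard; exact hcard
    have hBk : e + k ≤ B.card := by simpa using hB
    rcases Nat.eq_zero_or_pos k with hk0 | hkpos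
    · -- base case : k = 0, single block, A must be empty
      subst hk0
      have hAe : A = ∅ := by
        have : A.card = 0 := by simp at hcard'; omega
        exact Finset.card_eq_zero.mp this
      subst hAe
      have hBcard : B.card = e := by simp at hcard'; omega
      refine ⟨{B}, by simp, ?_, ⟨B, by simp⟩, ?_⟩
      · intro b hb
        simp only [Finset.mem_singleton] at hb
        subst hb
        refine ⟨hBcard, by simp, ?_⟩
        simp only [Finset.inter_self]
        exact Finset.card_pos.mp (by omega)
      · intro x hx
        simp only [Finset.empty_union] at hx
        exact ⟨B, ⟨by simp, hx⟩, by simp⟩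
    · -- inductive step
      rcases le_or_gt (e - 1) A.card with hA | hA
      · -- take e-1 from A and one from B
        obtain ⟨sA, hsA, hsAcard⟩ := Finset.exists_subset_card_eq hA
        have hBne : B.Nonempty := Finset.card_pos.mp (by omega)
        obtain ⟨b, hb⟩ := hBne
        have hbA : b ∉ sA := fun h => (Finset.disjoint_left.mp hdisj (hsA h)) hb
        set s : Finset α := insert b sA with hs
        have hscard : s.card = e := by
          rw [hs, Finset.card_insert_of_notMem hbA, hsAcard]; omega
        set A' := A \ sA with hA'
        set B' := B.erase b with hB'
        have hA'card : A'.card = A.card - (e - 1) := by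
          rw [hA', Finset.card_sdiff_of_subset hsA, hsAcard]
        have hB'card : B'.card = B.card - 1 := by
          rw [hB', Finset.card_erase_of_mem hb]
        have hdisj' : Disjoint A' B' :=
          (hdisj.mono (Finset.sdiff_subset) (Finset.erase_subset _ _))
        obtain ⟨P', hP'card, hP'blocks, hP'force, hP'cover⟩ :=
          ih hkpos A' B' hdisj' (by omega) (by omega)
        -- s is disjoint from A' ∪ B'
        have hsdisj : ∀ x ∈ s, x ∉ A' ∪ B' := by
          intro x hxs hx
          rw [hs, Finset.mem_insert] at hxs
          rcases hxs with rfl | hxs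
          · rcases Finset.mem_union.mp hx with h | h
            · exact (Finset.disjoint_left.mp hdisj (Finset.sdiff_subset h)) hb
            · exact (Finset.notMem_erase _ _) h
          · rcases Finset.mem_union.mp hx with h | h
            · exact (Finset.mem_sdiff.mp h).2 hxs
            · exact (Finset.disjoint_left.mp hdisj (hsA hxs)) (Finset.erase_subset _ _ h)
        have hsP' : s ∉ P' := by
          intro h
          have := (hP'blocks s h).2.1
          exact hsdisj b (by simp [hs]) (this (by simp [hs]))
        refine ⟨insert s P', ?_, ?_, ?_, ?_⟩
        · rw [Finset.card_insert_of_notMem hsP', hP'card]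
        · intro bb hbb
          rcases Finset.mem_insert.mp hbb with rfl | hbb
          · refine ⟨hscard, ?_, ⟨b, by simp [hs, hb]⟩⟩
            intro x hx
            rw [hs, Finset.mem_insert] at hx
            rcases hx with rfl | hx
            · exact Finset.mem_union_right _ hb
            · exact Finset.mem_union_left _ (hsA hx)
          · obtain ⟨h1, h2, h3⟩ := hP'blocks bb hbb
            refine ⟨h1, h2.trans
              (Finset.union_subset_union Finset.sdiff_subset (Finset.erase_subset _ _)), ?_⟩
            exact h3.mono
              (Finset.inter_subset_inter (Finset.Subset.refl _) (Finset.erase_subset _ _))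
        · obtain ⟨b₀, hb₀, hb₀B⟩ := hP'force
          exact ⟨b₀, Finset.mem_insert_of_mem hb₀, hb₀B.trans (Finset.erase_subset _ _)⟩
        · intro x hx
          by_cases hxs : x ∈ s
          · refine ⟨s, ⟨Finset.mem_insert_self _ _, hxs⟩, ?_⟩
            rintro bb ⟨hbb, hxbb⟩
            rcases Finset.mem_insert.mp hbb with rfl | hbb
            · rfl
            · exact absurd ((hP'blocks bb hbb).2.1 hxbb) (hsdisj x hxs)
          · have hx' : x ∈ A' ∪ B' := by
              rcases Finset.mem_union.mp hx with h | h
              · refine Finset.mem_union_left _ (Finset.mem_sdiff.mpr ⟨h, fun hc => hxs ?_⟩)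
                simp [hs, hc]
              · refine Finset.mem_union_right _ (Finset.mem_erase.mpr ⟨fun hc => hxs ?_, h⟩)
                simp [hs, hc]
            obtain ⟨bb, ⟨hbb, hxbb⟩, huniq⟩ := hP'cover x hx'
            refine ⟨bb, ⟨Finset.mem_insert_of_mem hbb, hxbb⟩, ?_⟩
            rintro cc ⟨hcc, hxcc⟩
            rcases Finset.mem_insert.mp hcc with rfl | hcc
            · exact absurd hxcc hxs
            · exact huniq cc ⟨hcc, hxcc⟩
      · -- A is small : take all of A plus e - A.card from B
        have h1 : e - A.card ≤ B.card := by omega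
        obtain ⟨sB, hsB, hsBcard⟩ := Finset.exists_subset_card_eq h1
        set s : Finset α := A ∪ sB with hs
        have hdisjAsB : Disjoint A sB := hdisj.mono_right hsB
        have hscard : s.card = e := by
          rw [hs, Finset.card_union_of_disjoint hdisjAsB, hsBcard]; omega
        set A' : Finset α := ∅ with hA'
        set B' := B \ sB with hB'
        have hB'card : B'.card = B.card - (e - A.card) := by
          rw [hB', Finset.card_sdiff_of_subset hsB, hsBcard]
        have hdisj' : Disjoint A' B' := by simp [hA']
        obtain ⟨P', hP'card, hP'blocks, hP'force, hP'cover⟩ :=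
          ih hkpos A' B' hdisj'
            (by simp only [hA', Finset.card_empty, Nat.zero_add]; omega)
            (by have hek : e + k ≤ e * k + 1 := by nlinarith
                omega)
        have hsBne : sB.Nonempty := Finset.card_pos.mp (by omega)
        have hsdisj : ∀ x ∈ s, x ∉ A' ∪ B' := by
          intro x hxs hx
          simp only [hA', Finset.empty_union] at hx
          rw [hs, Finset.mem_union] at hxs
          rcases hxs with hxs | hxs
          · exact (Finset.disjoint_left.mp hdisj hxs) (Finset.sdiff_subset hx)
          · exact (Finset.mem_sdiff.mp hx).2 hxs
        have hsP' : s ∉ P' := by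
          intro h
          obtain ⟨y, hy⟩ := hsBne
          have := (hP'blocks s h).2.1
          exact hsdisj y (by simp [hs, hy]) (this (by simp [hs, hy]))
        refine ⟨insert s P', ?_, ?_, ?_, ?_⟩
        · rw [Finset.card_insert_of_notMem hsP', hP'card]
        · intro bb hbb
          rcases Finset.mem_insert.mp hbb with rfl | hbb
          · refine ⟨hscard, ?_, ?_⟩
            · exact Finset.union_subset (Finset.subset_union_left)
                ((hsB.trans Finset.subset_union_right))
            · obtain ⟨y, hy⟩ := hsBne
              exact ⟨y, Finset.mem_inter.mpr ⟨Finset.mem_union_right _ hy, hsB hy⟩⟩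
          · obtain ⟨hc1, hc2, hc3⟩ := hP'blocks bb hbb
            refine ⟨hc1, hc2.trans ?_, ?_⟩
            · simp only [hA', Finset.empty_union]
              exact (Finset.sdiff_subset).trans Finset.subset_union_right
            · refine hc3.mono (Finset.inter_subset_inter (le_refl _) Finset.sdiff_subset) 
        · obtain ⟨b₀, hb₀, hb₀B⟩ := hP'force
          exact ⟨b₀, Finset.mem_insert_of_mem hb₀, hb₀B.trans Finset.sdiff_subset⟩
        · intro x hx
          by_cases hxs : x ∈ s
          · refine ⟨s, ⟨Finset.mem_insert_self _ _, hxs⟩, ?_⟩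
            rintro bb ⟨hbb, hxbb⟩
            rcases Finset.mem_insert.mp hbb with rfl | hbb
            · rfl
            · exact absurd ((hP'blocks bb hbb).2.1 hxbb) (hsdisj x hxs)
          · have hx' : x ∈ A' ∪ B' := by
              simp only [hA', Finset.empty_union, hB', Finset.mem_sdiff]
              rcases Finset.mem_union.mp hx with h | h
              · exact absurd (Finset.mem_union_left _ h : x ∈ s) hxs
              · exact ⟨h, fun hc => hxs (Finset.mem_union_right _ hc)⟩
            obtain ⟨bb, ⟨hbb, hxbb⟩, huniq⟩ := hP'cover x hx'
            refine ⟨bb, ⟨Finset.mem_insert_of_mem hbb, hxbb⟩, ?_⟩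
            rintro cc ⟨hcc, hxcc⟩
            rcases Finset.mem_insert.mp hcc with rfl | hcc
            · exact absurd hxcc hxs
            · exact huniq cc ⟨hcc, hxcc⟩
namespace SG

variable {M t e : ℕ}

def oldE (M t : ℕ) : Fin M ↪ Fin (M + t) :=
  ⟨Fin.castAdd t, fun a b h => by
    apply Fin.ext
    have := congrArg Fin.val h
    simpa using this⟩

def oldV (t : ℕ) (u : Fin M) : Fin (M + t) := Fin.castAdd t u

def newV (M : ℕ) {t : ℕ} (i : Fin t) : Fin (M + t) := Fin.natAdd M i

@[simp] lemma oldV_val (u : Fin M) : (oldV t u : Fin (M + t)).val = u.val := rfl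
@[simp] lemma newV_val (i : Fin t) : (newV M i : Fin (M + t)).val = M + i.val := rfl
@[simp] lemma oldE_apply (u : Fin M) : oldE M t u = oldV t u := rfl

lemma oldV_lt (u : Fin M) : (oldV t u : Fin (M+t)).val < M := u.isLt

lemma newV_ge (i : Fin t) : M ≤ (newV M i : Fin (M+t)).val := Nat.le_add_right _ _

lemma oldV_inj {u v : Fin M} (h : oldV t u = oldV t v) : u = v :=
  (oldE M t).injective h

lemma newV_inj {i j : Fin t} (h : newV M i = newV M j) : i = j := by
  apply Fin.ext
  have := congrArg Fin.val h
  simpa using this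

def extColour (c : Fin M → Fin 2) (nc : Fin t → Fin 2) : Fin (M + t) → Fin 2 :=
  fun x => if h : x.val < M then c ⟨x.val, h⟩ else
    nc ⟨x.val - M, by have := x.isLt; omega⟩

@[simp] lemma extColour_old (c : Fin M → Fin 2) (nc : Fin t → Fin 2) (u : Fin M) :
    extColour c nc (oldV t u) = c u := by
  simp [extColour, oldV_lt u]

@[simp] lemma extColour_new (c : Fin M → Fin 2) (nc : Fin t → Fin 2) (i : Fin t) :
    extColour c nc (newV M i) = nc i := by
  have h : ¬ ((newV M i : Fin (M+t)).val < M) := by simp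
  simp only [extColour, h, dif_neg, not_false_iff]
  congr 1
  apply Fin.ext
  simp

def liftStar (t : ℕ) (S : EStar M e) : EStar (M + t) e :=
  ⟨oldV t S.centre, S.leaves.map (oldE M t), by simp [S.card_leaves], by
    simp only [Finset.mem_map, oldE_apply, not_exists]
    rintro a ⟨ha, h⟩
    exact S.centre_not_leaf ((oldV_inj h) ▸ ha)⟩

lemma liftStar_inj {S₁ S₂ : EStar M e} (h : liftStar t S₁ = liftStar t S₂) : S₁ = S₂ := by
  cases S₁; cases S₂
  simp only [liftStar, EStar.mk.injEq] at h ⊢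
  obtain ⟨h1, h2⟩ := h
  exact ⟨oldV_inj h1, Finset.map_injective _ h2⟩

lemma mem_edges {n : ℕ} {S : EStar n e} {p : Sym2 (Fin n)} :
    p ∈ S.edges ↔ ∃ a ∈ S.leaves, s(S.centre, a) = p := by
  simp [EStar.edges]

lemma mem_liftStar_edges_elim {S : EStar M e} {u v : Fin (M + t)}
    (h : s(u, v) ∈ (liftStar t S).edges) :
    ∃ u₀ v₀ : Fin M, u = oldV t u₀ ∧ v = oldV t v₀ ∧ s(u₀, v₀) ∈ S.edges := by
  rw [mem_edges] at h
  obtain ⟨a, ha, hpa⟩ := h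
  simp only [liftStar, Finset.mem_map, oldE_apply] at ha
  obtain ⟨a₀, ha₀, rfl⟩ := ha
  have hc : (liftStar t S).centre = oldV t S.centre := rfl
  rw [hc] at hpa
  rw [Sym2.eq_iff] at hpa
  rcases hpa with ⟨h1, h2⟩ | ⟨h1, h2⟩
  · exact ⟨S.centre, a₀, h1.symm, h2.symm, mem_edges.mpr ⟨a₀, ha₀, rfl⟩⟩
  · exact ⟨a₀, S.centre, h2.symm, h1.symm, mem_edges.mpr ⟨a₀, ha₀, by rw [Sym2.eq_swap]⟩⟩

lemma mem_liftStar_edges {S : EStar M e} {u v : Fin M}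
    (h : s(u, v) ∈ S.edges) : s(oldV t u, oldV t v) ∈ (liftStar t S).edges := by
  rw [mem_edges] at h ⊢
  obtain ⟨a, ha, hpa⟩ := h
  refine ⟨oldV t a, ?_, ?_⟩
  · simp only [liftStar, Finset.mem_map, oldE_apply]
    exact ⟨a, ha, rfl⟩
  · have hc : (liftStar t S).centre = oldV t S.centre := rfl
    rw [hc]
    rw [Sym2.eq_iff] at hpa ⊢
    rcases hpa with ⟨h1, h2⟩ | ⟨h1, h2⟩
    · exact Or.inl ⟨congrArg _ h1, congrArg _ h2⟩
    · exact Or.inr ⟨congrArg _ h1, congrArg _ h2⟩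

def crossStar (i : Fin t) (b : Finset (Fin M)) (hb : b.card = e) : EStar (M + t) e :=
  ⟨newV M i, b.map (oldE M t), by simp [hb], by
    simp only [Finset.mem_map, oldE_apply, not_exists]
    rintro a ⟨-, h⟩
    have h1 := congrArg Fin.val h
    have h2 := a.isLt
    simp at h1
    omega⟩

@[simp] lemma crossStar_centre (i : Fin t) (b : Finset (Fin M)) (hb : b.card = e) :
    (crossStar i b hb).centre = newV M i := rfl

lemma mem_crossStar_edges_elim {i : Fin t} {b : Finset (Fin M)} {hb : b.card = e}
    {u v : Fin (M + t)} (h : s(u, v) ∈ (crossStar i b hb).edges) :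
    ∃ w ∈ b, s(u, v) = s(newV M i, oldV t w) := by
  rw [mem_edges] at h
  obtain ⟨a, ha, hpa⟩ := h
  simp only [crossStar, Finset.mem_map, oldE_apply] at ha
  obtain ⟨w, hw, rfl⟩ := ha
  exact ⟨w, hw, hpa.symm⟩

lemma mem_crossStar_edges {i : Fin t} {b : Finset (Fin M)} {hb : b.card = e}
    {w : Fin M} (hw : w ∈ b) : s(newV M i, oldV t w) ∈ (crossStar i b hb).edges := by
  rw [mem_edges]
  refine ⟨oldV t w, ?_, rfl⟩
  simp only [crossStar, Finset.mem_map, oldE_apply]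
  exact ⟨w, hw, rfl⟩

lemma fin2_opp_ne : ∀ j : Fin 2, j + 1 ≠ j := by decide

lemma fin2_eq_opp_of_ne : ∀ {x j : Fin 2}, x ≠ j → x = j + 1 := by decide

end SG
namespace SG

lemma fin2_add_one_add_one : ∀ x : Fin 2, x + 1 + 1 = x := by decide

@[simp] lemma extColour_castAdd {M t : ℕ} (c : Fin M → Fin 2) (nc : Fin t → Fin 2)
    (u : Fin M) : extColour c nc (Fin.castAdd t u) = c u := extColour_old c nc u

@[simp] lemma extColour_natAdd {M t : ℕ} (c : Fin M → Fin 2) (nc : Fin t → Fin 2)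
    (i : Fin t) : extColour c nc (Fin.natAdd M i) = nc i := extColour_new c nc i

lemma classCard_ext {M t : ℕ} (c : Fin M → Fin 2) (nc : Fin t → Fin 2) (j : Fin 2) :
    classCard (extColour c nc) j = classCard c j + classCard nc j := by
  simp only [classCard, Finset.card_filter]
  rw [Fin.sum_univ_add]
  simp

lemma extend (e M t : ℕ) (he : 3 ≤ e) (hM : M % (2*e) = 0) (hsize : e < M / 2)
    (sys : EStarSystem M e) (c : Fin M → Fin 2)
    (hweak : IsWeakColouring sys c) (hequit : ∀ i, classCard c i = M / 2)
    (huniq : ∀ χ : Fin M → Fin 2, IsWeakColouring sys χ →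
      ∃ π : Equiv.Perm (Fin 2), χ = π ∘ c)
    (hne : sys.stars.Nonempty)
    (nc : Fin t → Fin 2)
    (ring : Finset (EStar (M+t) e))
    (hring1 : ∀ S ∈ ring, M ≤ S.centre.val ∧ ∀ a ∈ S.leaves, M ≤ a.val)
    (hring2 : ∀ u v : Fin (M+t), M ≤ u.val → M ≤ v.val → u ≠ v →
       ∃! S, S ∈ ring ∧ s(u,v) ∈ S.edges)
    (hring3 : ∀ S ∈ ring, ∃ a ∈ S.leaves, extColour c nc a ≠ extColour c nc S.centre) :
    ∃ sys' : EStarSystem (M+t) e,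
      IsWeakColouring sys' (extColour c nc) ∧
      (∀ χ, IsWeakColouring sys' χ → ∃ π : Equiv.Perm (Fin 2), χ = π ∘ (extColour c nc)) ∧
      sys'.stars.Nonempty := by
  classical
  have he0 : 0 < e := by omega
  have hdvd : 2*e ∣ M := Nat.dvd_of_mod_eq_zero hM
  have hqM : M = 2*e*(M / (2*e)) := (Nat.mul_div_cancel' hdvd).symm
  set q := M / (2*e) with hqdef
  have hqM2 : M = 2*(e*q) := by rw [hqM]; ring
  have hm2 : M / 2 = e * q := by omega
  have heq : e < e * q := by omega
  have hq2 : 2 ≤ q := by nlinarith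
  set k := 2*q with hk
  have hek : e * k = M := by rw [hk, hqM2]; ring
  -- colour classes
  set cls : Fin 2 → Finset (Fin M) := fun j => Finset.univ.filter (fun v => c v = j)
    with hcls
  have hclscard : ∀ j, (cls j).card = e * q := by
    intro j
    have h1 := hequit j
    rw [classCard] at h1
    simp only [hcls]
    omega
  have hdisj2 : ∀ γ : Fin 2, Disjoint (cls γ) (cls (γ+1)) := by
    intro γ
    rw [Finset.disjoint_left]
    intro a ha hb
    simp only [hcls, Finset.mem_filter, Finset.mem_univ, true_and] at ha hb
    rw [ha] at hb
    exact fin2_opp_ne γ hb.symm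
  have hcover_cls : ∀ (γ : Fin 2) (x : Fin M), x ∈ cls γ ∪ cls (γ+1) := by
    intro γ x
    simp only [hcls, Finset.mem_union, Finset.mem_filter, Finset.mem_univ, true_and]
    by_cases h : c x = γ
    · exact Or.inl h
    · exact Or.inr (fin2_eq_opp_of_ne h)
  have hcardsum : ∀ γ : Fin 2, (cls γ).card + (cls (γ+1)).card = e * k := by
    intro γ
    rw [hclscard, hclscard, hk]
    ring
  have hBbig : ∀ γ : Fin 2, e + (k - 1) ≤ (cls (γ+1)).card := by
    intro γ
    rw [hclscard, hk]
    have : e + 2*q ≤ e*q + 1 := by nlinarith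
    omega
  have hblocks : ∀ i : Fin t, ∃ Pi : Finset (Finset (Fin M)), Pi.card = k ∧
      (∀ b ∈ Pi, b.card = e ∧ b ⊆ cls (nc i) ∪ cls (nc i + 1) ∧
        (b ∩ cls (nc i + 1)).Nonempty) ∧
      (∃ b₀ ∈ Pi, b₀ ⊆ cls (nc i + 1)) ∧
      (∀ x ∈ cls (nc i) ∪ cls (nc i + 1), ∃! b, b ∈ Pi ∧ x ∈ b) := by
    intro i
    exact exists_blocks e (by omega) k (by omega) (cls (nc i)) (cls (nc i + 1))
      (hdisj2 _) (hcardsum _) (hBbig _)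
  choose P hPcard hPblocks hPforce hPcover using hblocks
  -- the star set
  set crossSet : Fin t → Finset (EStar (M+t) e) := fun i =>
    (P i).attach.image (fun b => crossStar i b.1 ((hPblocks i b.1 b.2).1)) with hcrossSet
  set stars' : Finset (EStar (M+t) e) :=
    (sys.stars.image (liftStar t)) ∪ Finset.univ.biUnion crossSet ∪ ring with hstars'
  have hmem : ∀ S' : EStar (M+t) e, S' ∈ stars' ↔
      ((∃ S ∈ sys.stars, liftStar t S = S') ∨
       (∃ i : Fin t, ∃ b : {x // x ∈ P i},
         crossStar i b.1 ((hPblocks i b.1 b.2).1) = S') ∨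
       S' ∈ ring) := by
    intro S'
    rw [hstars']
    simp only [Finset.mem_union, Finset.mem_biUnion, Finset.mem_image, Finset.mem_univ,
      true_and, hcrossSet, Finset.mem_attach, exists_true_left]
    exact or_assoc
  have hmemL : ∀ S ∈ sys.stars, liftStar t S ∈ stars' := by
    intro S hS
    rw [hmem]
    exact Or.inl ⟨S, hS, rfl⟩
  have hmemC : ∀ (i : Fin t) (b : Finset (Fin M)) (hb : b ∈ P i),
      crossStar i b ((hPblocks i b hb).1) ∈ stars' := by
    intro i b hb
    rw [hmem]
    exact Or.inr (Or.inl ⟨i, ⟨b, hb⟩, rfl⟩)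
  have hmemR : ∀ S ∈ ring, S ∈ stars' := by
    intro S hS
    rw [hmem]
    exact Or.inr (Or.inr hS)
  -- the mixed-edge case of the partition property
  have key : ∀ u v : Fin (M+t), u.val < M → ¬ (v.val < M) →
      ∃! S, S ∈ stars' ∧ s(u,v) ∈ S.edges := by
    intro u v hu hv
    set u₀ : Fin M := ⟨u.val, hu⟩ with hu₀
    have hvt : v.val - M < t := by have := v.isLt; omega
    set i : Fin t := ⟨v.val - M, hvt⟩ with hi
    have hueq : u = oldV t u₀ := by apply Fin.ext; simp [hu₀]
    have hveq : v = newV M i := by apply Fin.ext; simp [hi]; omega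
    obtain ⟨b, ⟨hbP, hub⟩, hbuniq⟩ := hPcover i u₀ (hcover_cls _ _)
    have hswap : s(u, v) = s(newV M i, oldV t u₀) := by
      rw [hueq, hveq, Sym2.eq_swap]
    refine ⟨crossStar i b ((hPblocks i b hbP).1), ⟨hmemC i b hbP, ?_⟩, ?_⟩
    · rw [hswap]
      exact mem_crossStar_edges hub
    · rintro S' ⟨hS'mem, hS'edge⟩
      rcases (hmem S').mp hS'mem with ⟨S₁, hS₁, rfl⟩ | ⟨j, b', rfl⟩ | hS'ring
      · obtain ⟨u₁, v₁, hu1, hv1, _⟩ := mem_liftStar_edges_elim hS'edge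
        exact absurd (hv1 ▸ oldV_lt v₁) hv
      · obtain ⟨w, hw, hwe⟩ := mem_crossStar_edges_elim hS'edge
        rw [Sym2.eq_iff] at hwe
        rcases hwe with ⟨h1, h2⟩ | ⟨h1, h2⟩
        · exact absurd (h1 ▸ (newV_ge (M := M) j)) (by omega)
        · have hji : j = i := by
            rw [hveq] at h2
            exact newV_inj h2.symm
          subst hji
          have hwu : w = u₀ := by
            apply oldV_inj (t := t)
            rw [← h1, hueq]
          subst hwu
          have hbb : b'.1 = b := hbuniq b'.1 ⟨b'.2, hw⟩
          have hbb' : b' = ⟨b, hbP⟩ := Subtype.ext hbb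
          rw [hbb']
      · obtain ⟨a, haS, hpa⟩ := mem_edges.mp hS'edge
        have hcge := (hring1 S' hS'ring).1
        have hage := (hring1 S' hS'ring).2 a haS
        rw [Sym2.eq_iff] at hpa
        rcases hpa with ⟨h1, h2⟩ | ⟨h1, h2⟩
        · rw [← h1] at hu; omega
        · rw [← h2] at hu; omega
  -- the full partition property
  have hpart : ∀ p : Sym2 (Fin (M+t)), ¬ p.IsDiag →
      ∃! S, S ∈ stars' ∧ p ∈ EStar.edges S := by
    intro p
    induction p using Sym2.ind with
    | _ u v =>
      intro hdiag
      rw [Sym2.mk_isDiag_iff] at hdiag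
      by_cases hu : u.val < M
      · by_cases hv : v.val < M
        · -- both endpoints old
          set u₀ : Fin M := ⟨u.val, hu⟩ with hu₀
          set v₀ : Fin M := ⟨v.val, hv⟩ with hv₀
          have hueq : u = oldV t u₀ := by apply Fin.ext; simp [hu₀]
          have hveq : v = oldV t v₀ := by apply Fin.ext; simp [hv₀]
          have hnd : ¬ (s(u₀, v₀) : Sym2 (Fin M)).IsDiag := by
            rw [Sym2.mk_isDiag_iff]
            intro h
            exact hdiag (by rw [hueq, hveq, h])
          obtain ⟨S₀, ⟨hS₀mem, hS₀edge⟩, hS₀uniq⟩ := sys.partition _ hnd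
          refine ⟨liftStar t S₀, ⟨hmemL S₀ hS₀mem, ?_⟩, ?_⟩
          · rw [hueq, hveq]; exact mem_liftStar_edges hS₀edge
          · rintro S' ⟨hS'mem, hS'edge⟩
            rcases (hmem S').mp hS'mem with ⟨S₁, hS₁, rfl⟩ | ⟨j, b', rfl⟩ | hS'ring
            · obtain ⟨u₁, v₁, hu1, hv1, hedge₁⟩ := mem_liftStar_edges_elim hS'edge
              have hu₁ : u₁ = u₀ := oldV_inj (t := t) (by rw [← hu1, hueq])
              have hv₁ : v₁ = v₀ := oldV_inj (t := t) (by rw [← hv1, hveq])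
              rw [hu₁, hv₁] at hedge₁
              rw [hS₀uniq S₁ ⟨hS₁, hedge₁⟩]
            · obtain ⟨w, hw, hwe⟩ := mem_crossStar_edges_elim hS'edge
              rw [Sym2.eq_iff] at hwe
              rcases hwe with ⟨h1, _⟩ | ⟨_, h2⟩
              · have := newV_ge (M := M) j; rw [← h1] at this; omega
              · have := newV_ge (M := M) j; rw [← h2] at this; omega
            · obtain ⟨a, haS, hpa⟩ := mem_edges.mp hS'edge
              have hcge := (hring1 S' hS'ring).1
              have hage := (hring1 S' hS'ring).2 a haS
              rw [Sym2.eq_iff] at hpa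
              rcases hpa with ⟨h1, h2⟩ | ⟨h1, h2⟩
              · rw [← h1] at hu; omega
              · rw [← h2] at hu; omega
        · exact key u v hu hv
      · by_cases hv : v.val < M
        · have hsw : s(u, v) = s(v, u) := Sym2.eq_swap
          rw [hsw]
          exact key v u hv hu
        · -- both endpoints new
          obtain ⟨S₀, ⟨hS₀r, hS₀e⟩, hS₀u⟩ := hring2 u v (by omega) (by omega) hdiag
          refine ⟨S₀, ⟨hmemR S₀ hS₀r, hS₀e⟩, ?_⟩
          rintro S' ⟨hS'mem, hS'edge⟩
          rcases (hmem S').mp hS'mem with ⟨S₁, hS₁, rfl⟩ | ⟨j, b', rfl⟩ | hS'ring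
          · obtain ⟨u₁, v₁, hu1, hv1, _⟩ := mem_liftStar_edges_elim hS'edge
            have := oldV_lt (t := t) u₁
            rw [← hu1] at this
            omega
          · obtain ⟨w, hw, hwe⟩ := mem_crossStar_edges_elim hS'edge
            rw [Sym2.eq_iff] at hwe
            rcases hwe with ⟨_, h2⟩ | ⟨h1, _⟩
            · have := oldV_lt (t := t) w; rw [← h2] at this; omega
            · have := oldV_lt (t := t) w; rw [← h1] at this; omega
          · exact hS₀u S' ⟨hS'ring, hS'edge⟩
  refine ⟨⟨stars', hpart⟩, ?_, ?_, ?_⟩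
  · -- the extended colouring is weak
    intro S' hS'
    rcases (hmem S').mp hS' with ⟨S, hS, rfl⟩ | ⟨i, b, rfl⟩ | hS'ring
    · obtain ⟨a, ha, hne'⟩ := hweak S hS
      refine ⟨oldV t a, ?_, ?_⟩
      · show oldV t a ∈ (liftStar t S).leaves
        simp only [liftStar, Finset.mem_map, oldE_apply]
        exact ⟨a, ha, rfl⟩
      · show extColour c nc (oldV t a) ≠ extColour c nc (liftStar t S).centre
        have hcent : (liftStar t S).centre = oldV t S.centre := rfl
        rw [hcent, extColour_old, extColour_old]
        exact hne'
    · obtain ⟨w, hw⟩ := (hPblocks i b.1 b.2).2.2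
      rw [Finset.mem_inter] at hw
      have hcw : c w = nc i + 1 := by
        have h2 := hw.2
        simp only [hcls, Finset.mem_filter, Finset.mem_univ, true_and] at h2
        exact h2
      refine ⟨oldV t w, ?_, ?_⟩
      · show oldV t w ∈ (crossStar i b.1 _).leaves
        simp only [crossStar, Finset.mem_map, oldE_apply]
        exact ⟨w, hw.1, rfl⟩
      · show extColour c nc (oldV t w) ≠ extColour c nc (crossStar i b.1 _).centre
        have hcent : (crossStar i b.1 ((hPblocks i b.1 b.2).1)).centre = newV M i := rfl
        rw [hcent, extColour_old, extColour_new, hcw]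
        exact fin2_opp_ne (nc i)
    · exact hring3 S' hS'ring
  · -- unique colourability
    intro χ hχ
    set χ₀ : Fin M → Fin 2 := fun u => χ (oldV t u) with hχ₀
    have hw₀ : IsWeakColouring sys χ₀ := by
      intro S hS
      obtain ⟨a', ha', hne'⟩ := hχ (liftStar t S) (hmemL S hS)
      simp only [liftStar, Finset.mem_map, oldE_apply] at ha'
      obtain ⟨a, ha, rfl⟩ := ha'
      exact ⟨a, ha, hne'⟩
    obtain ⟨π, hπ⟩ := huniq χ₀ hw₀
    have hπ' : ∀ w : Fin M, χ (oldV t w) = π (c w) := by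
      intro w
      have : χ₀ w = (π ∘ c) w := by rw [hπ]
      exact this
    have hnew : ∀ i : Fin t, χ (newV M i) = π (nc i) := by
      intro i
      obtain ⟨b₀, hb₀P, hb₀B⟩ := hPforce i
      obtain ⟨a', ha', hne'⟩ :=
        hχ (crossStar i b₀ ((hPblocks i b₀ hb₀P).1)) (hmemC i b₀ hb₀P)
      simp only [crossStar, Finset.mem_map, oldE_apply] at ha'
      obtain ⟨w, hw, rfl⟩ := ha'
      have hcw : c w = nc i + 1 := by
        have h2 := hb₀B hw
        simp only [hcls, Finset.mem_filter, Finset.mem_univ, true_and] at h2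
        exact h2
      have hχw : χ (oldV t w) = π (nc i + 1) := by rw [hπ' w, hcw]
      have hcent : (crossStar i b₀ ((hPblocks i b₀ hb₀P).1)).centre = newV M i := rfl
      rw [hχw, hcent] at hne'
      have h2 : π.symm (χ (newV M i)) ≠ nc i + 1 := by
        intro h
        apply hne'
        rw [← h]
        simp
      have h3 : π.symm (χ (newV M i)) = nc i := by
        have h4 := fin2_eq_opp_of_ne h2
        rw [fin2_add_one_add_one] at h4
        exact h4
      calc χ (newV M i) = π (π.symm (χ (newV M i))) := by simp
        _ = π (nc i) := by rw [h3]
    refine ⟨π, ?_⟩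
    funext x
    show χ x = π (extColour c nc x)
    by_cases hx : x.val < M
    · have hxe : x = oldV t (⟨x.val, hx⟩ : Fin M) := by apply Fin.ext; simp
      rw [hxe, extColour_old]
      exact hπ' _
    · have hxt : x.val - M < t := by have := x.isLt; omega
      have hxe : x = newV M (⟨x.val - M, hxt⟩ : Fin t) := by
        apply Fin.ext
        simp
        omega
      rw [hxe, extColour_new]
      exact hnew _
  · obtain ⟨S, hS⟩ := hne
    exact ⟨liftStar t S, hmemL S hS⟩

end SG
namespace SG

lemma modred (x n : ℕ) (hn : 0 < n) (h : x < 2*n) :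
    (x < n ∧ x % n = x) ∨ (n ≤ x ∧ x % n = x - n) := by
  rcases lt_or_ge x n with h1 | h1
  · exact Or.inl ⟨h1, Nat.mod_eq_of_lt h1⟩
  · refine Or.inr ⟨h1, ?_⟩
    rw [Nat.mod_eq_sub_mod h1, Nat.mod_eq_of_lt (by omega)]

lemma eq_newV_iff {M t : ℕ} {z : Fin (M+t)} {j : Fin t} :
    z = newV M j ↔ z.val = M + j.val := by
  rw [Fin.ext_iff]; simp

lemma mem_star_edges {n e : ℕ} {S : EStar n e} {u v : Fin n} :
    s(u,v) ∈ S.edges ↔ (u = S.centre ∧ v ∈ S.leaves) ∨ (v = S.centre ∧ u ∈ S.leaves) := by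
  rw [mem_edges]
  constructor
  · rintro ⟨a, ha, hpa⟩
    rw [Sym2.eq_iff] at hpa
    rcases hpa with ⟨h1, h2⟩ | ⟨h1, h2⟩
    · exact Or.inl ⟨h1.symm, h2 ▸ ha⟩
    · exact Or.inr ⟨h1.symm, h2 ▸ ha⟩
  · rintro (⟨rfl, hv⟩ | ⟨rfl, hu⟩)
    · exact ⟨v, hv, rfl⟩
    · exact ⟨u, hu, Sym2.eq_swap⟩

def ringStar (M e : ℕ) (he : 3 ≤ e) (i : ℕ) (hi : i < 2*e-1) : EStar (M + 2*e) e where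
  centre := newV M ⟨i, by omega⟩
  leaves := insert (newV M (⟨2*e-1, by omega⟩ : Fin (2*e)))
    ((Finset.Icc 1 (e-1)).image (fun d => newV M (⟨(i+d) % (2*e-1), by
        have := Nat.mod_lt (i+d) (y := 2*e-1) (by omega); omega⟩ : Fin (2*e))))
  card_leaves := by
    have hinj : Set.InjOn (fun d => newV M (⟨(i+d) % (2*e-1), by
        have := Nat.mod_lt (i+d) (y := 2*e-1) (by omega); omega⟩ : Fin (2*e)))
        (Finset.Icc 1 (e-1)) := by
      intro d₁ h₁ d₂ h₂ hEq
      simp only [Finset.coe_Icc, Set.mem_Icc] at h₁ h₂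
      have hv := congrArg Fin.val hEq
      simp only [newV_val] at hv
      rcases modred (i+d₁) (2*e-1) (by omega) (by omega) with ⟨h, h'⟩ | ⟨h, h'⟩ <;>
        rcases modred (i+d₂) (2*e-1) (by omega) (by omega) with ⟨g, g'⟩ | ⟨g, g'⟩ <;>
        omega
    have hnot : newV M (⟨2*e-1, by omega⟩ : Fin (2*e)) ∉
        (Finset.Icc 1 (e-1)).image (fun d => newV M (⟨(i+d) % (2*e-1), by
          have := Nat.mod_lt (i+d) (y := 2*e-1) (by omega); omega⟩ : Fin (2*e))) := by
      simp only [Finset.mem_image, Finset.mem_Icc, not_exists, not_and]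
      intro d hd hEq
      have hv := congrArg Fin.val hEq
      simp only [newV_val] at hv
      have := Nat.mod_lt (i+d) (y := 2*e-1) (by omega)
      omega
    rw [Finset.card_insert_of_notMem hnot, Finset.card_image_of_injOn hinj, Nat.card_Icc]
    omega
  centre_not_leaf := by
    simp only [Finset.mem_insert, Finset.mem_image, Finset.mem_Icc, not_or, not_exists,
      not_and]
    constructor
    · intro h
      have hv := congrArg Fin.val h
      simp only [newV_val] at hv
      omega
    · intro d hd hEq
      have hv := congrArg Fin.val hEq
      simp only [newV_val] at hv
      rcases modred (i+d) (2*e-1) (by omega) (by omega) with ⟨h, h'⟩ | ⟨h, h'⟩ <;> omega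

lemma ringStar_centre_val {M e : ℕ} (he : 3 ≤ e) {i : ℕ} (hi : i < 2*e-1) :
    (ringStar M e he i hi).centre.val = M + i := rfl

lemma mem_ringStar_leaves {M e i : ℕ} {he : 3 ≤ e} {hi : i < 2*e-1} {z : Fin (M + 2*e)} :
    z ∈ (ringStar M e he i hi).leaves ↔
      z.val = M + (2*e-1) ∨ ∃ d, 1 ≤ d ∧ d ≤ e-1 ∧ z.val = M + (i+d) % (2*e-1) := by
  simp only [ringStar, Finset.mem_insert, Finset.mem_image, Finset.mem_Icc]
  constructor
  · rintro (h | ⟨d, ⟨h1, h2⟩, hEq⟩)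
    · left; have := congrArg Fin.val h; simpa using this
    · right; exact ⟨d, h1, h2, by have := congrArg Fin.val hEq; simpa using this.symm⟩
  · rintro (h | ⟨d, h1, h2, h3⟩)
    · left; rw [eq_newV_iff]; simpa using h
    · right; exact ⟨d, ⟨h1, h2⟩, (eq_newV_iff.mpr (by simpa using h3)).symm⟩

def ringSet (M e : ℕ) (he : 3 ≤ e) : Finset (EStar (M+2*e) e) :=
  (Finset.range (2*e-1)).attach.image
    (fun i => ringStar M e he i.1 (Finset.mem_range.mp i.2))

lemma mem_ringSet {M e : ℕ} {he : 3 ≤ e} {S : EStar (M+2*e) e} :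
    S ∈ ringSet M e he ↔ ∃ (i : ℕ) (hi : i < 2*e-1), S = ringStar M e he i hi := by
  simp only [ringSet, Finset.mem_image, Finset.mem_attach, true_and]
  constructor
  · rintro ⟨⟨i, hi⟩, hEq⟩
    exact ⟨i, Finset.mem_range.mp hi, hEq.symm⟩
  · rintro ⟨i, hi, hEq⟩
    exact ⟨⟨i, Finset.mem_range.mpr hi⟩, hEq.symm⟩

lemma Cnd_iff {e j x : ℕ} (he : 3 ≤ e) (hj : j < 2*e-1) (hx : x < 2*e) :
    (x = 2*e-1 ∨ ∃ d, 1 ≤ d ∧ d ≤ e-1 ∧ x = (j+d) % (2*e-1)) ↔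
    (x = 2*e-1 ∨ (j < x ∧ x - j ≤ e-1 ∧ x < 2*e-1) ∨ (x < j ∧ e ≤ j - x)) := by
  constructor
  · rintro (h | ⟨d, h1, h2, h3⟩)
    · exact Or.inl h
    · right
      rcases modred (j+d) (2*e-1) (by omega) (by omega) with ⟨h, h'⟩ | ⟨h, h'⟩
      · left; omega
      · right; omega
  · rintro (h | ⟨h1, h2, h3⟩ | ⟨h1, h2⟩)
    · exact Or.inl h
    · right
      refine ⟨x - j, by omega, by omega, ?_⟩
      have hxj : j + (x - j) = x := by omega
      rw [hxj, Nat.mod_eq_of_lt (by omega)]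
    · right
      refine ⟨x + (2*e-1) - j, by omega, by omega, ?_⟩
      have hxj : j + (x + (2*e-1) - j) = x + (2*e-1) := by omega
      rw [hxj, Nat.add_mod_right, Nat.mod_eq_of_lt (by omega)]

lemma ring_half {M e : ℕ} (he : 3 ≤ e) (u v : Fin (M+2*e)) (a b : ℕ)
    (hua : u.val = M + a) (hvb : v.val = M + b) (ha : a < 2*e) (hb : b < 2*e)
    (hA : a < 2*e-1 ∧
      (b = 2*e-1 ∨ (a < b ∧ b - a ≤ e-1 ∧ b < 2*e-1) ∨ (b < a ∧ e ≤ a - b)))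
    (hnB : ¬(b < 2*e-1 ∧
      (a = 2*e-1 ∨ (b < a ∧ a - b ≤ e-1 ∧ a < 2*e-1) ∨ (a < b ∧ e ≤ b - a)))) :
    ∃! S, S ∈ ringSet M e he ∧ s(u,v) ∈ S.edges := by
  obtain ⟨ha2, hD⟩ := hA
  refine ⟨ringStar M e he a ha2, ⟨mem_ringSet.mpr ⟨a, ha2, rfl⟩, ?_⟩, ?_⟩
  · rw [mem_star_edges]
    left
    constructor
    · rw [Fin.ext_iff, ringStar_centre_val he ha2, hua]
    · rw [mem_ringStar_leaves]
      rw [← Cnd_iff he ha2 hb] at hD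
      rcases hD with h | ⟨d, h1, h2, h3⟩
      · left; omega
      · right; exact ⟨d, h1, h2, by omega⟩
  · rintro S' ⟨hS'mem, hS'edge⟩
    obtain ⟨j, hj, rfl⟩ := mem_ringSet.mp hS'mem
    rw [mem_star_edges] at hS'edge
    rcases hS'edge with ⟨h1, h2⟩ | ⟨h1, h2⟩
    · have haj : a = j := by
        have := congrArg Fin.val h1
        rw [ringStar_centre_val he hj, hua] at this
        omega
      subst haj
      rfl
    · exfalso
      have hbj : b = j := by
        have := congrArg Fin.val h1
        rw [ringStar_centre_val he hj, hvb] at this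
        omega
      subst hbj
      rw [mem_ringStar_leaves] at h2
      have hCnd : a = 2*e-1 ∨ ∃ d, 1 ≤ d ∧ d ≤ e-1 ∧ a = (b+d) % (2*e-1) := by
        rcases h2 with h | ⟨d, g1, g2, g3⟩
        · left; omega
        · right; exact ⟨d, g1, g2, by omega⟩
      rw [Cnd_iff he hj ha] at hCnd
      exact hnB ⟨hj, hCnd⟩

end SG
namespace SG

lemma card_parity_range (n r : ℕ) (hr : r < 2) :
    ((Finset.range (2*n)).filter (fun i => i % 2 = r)).card = n := by
  induction n with
  | zero => simp
  | succ m ih =>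
    have h2 : 2*(m+1) = (2*m + 1) + 1 := by ring
    rw [h2, Finset.range_add_one, Finset.filter_insert, Finset.range_add_one, Finset.filter_insert]
    interval_cases r
    · rw [if_neg (by omega), if_pos (by omega),
        Finset.card_insert_of_notMem (by simp), ih]
    · rw [if_pos (by omega), if_neg (by omega),
        Finset.card_insert_of_notMem (by simp), ih]

lemma classCard_parity (e : ℕ) (j : Fin 2) :
    classCard (fun i : Fin (2*e) => (⟨i.val % 2, by omega⟩ : Fin 2)) j = e := by
  rw [classCard]
  rw [show (Finset.univ.filter (fun v : Fin (2*e) => (⟨v.val % 2, by omega⟩ : Fin 2) = j))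
      = Finset.univ.filter (fun v : Fin (2*e) => v.val % 2 = j.val) from by
    apply Finset.filter_congr; intro v _; simp [Fin.ext_iff]]
  rw [Finset.card_filter,
    Fin.sum_univ_eq_sum_range (fun x => if x % 2 = j.val then 1 else 0) (2*e),
    ← Finset.card_filter]
  exact card_parity_range e j.val j.isLt

lemma stepA (e M : ℕ) (he : 3 ≤ e) (hM : M % (2*e) = 0) (hsize : e < M / 2)
    (sys : EStarSystem M e) (c : Fin M → Fin 2)
    (hweak : IsWeakColouring sys c) (hequit : ∀ i, classCard c i = M / 2)
    (huniq : ∀ χ, IsWeakColouring sys χ → ∃ π : Equiv.Perm (Fin 2), χ = π ∘ c)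
    (hne : sys.stars.Nonempty) :
    ∃ (sys' : EStarSystem (M + 2*e) e) (c' : Fin (M + 2*e) → Fin 2),
      IsWeakColouring sys' c' ∧ (∀ i, classCard c' i = (M + 2*e) / 2) ∧
      (∀ χ, IsWeakColouring sys' χ → ∃ π : Equiv.Perm (Fin 2), χ = π ∘ c') ∧
      sys'.stars.Nonempty := by
  set nc : Fin (2*e) → Fin 2 := fun i => ⟨i.val % 2, by omega⟩ with hnc
  have hring1 : ∀ S ∈ ringSet M e he, M ≤ S.centre.val ∧ ∀ a ∈ S.leaves, M ≤ a.val := by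
    intro S hS
    obtain ⟨i, hi, rfl⟩ := mem_ringSet.mp hS
    constructor
    · rw [ringStar_centre_val he hi]; omega
    · intro a ha
      rw [mem_ringStar_leaves] at ha
      rcases ha with h | ⟨d, _, _, h⟩ <;> omega
  have hring2 : ∀ u v : Fin (M + 2*e), M ≤ u.val → M ≤ v.val → u ≠ v →
      ∃! S, S ∈ ringSet M e he ∧ s(u,v) ∈ S.edges := by
    intro u v hu hv huv
    set a := u.val - M with hadef
    set b := v.val - M with hbdef
    have hua : u.val = M + a := by omega
    have hvb : v.val = M + b := by omega
    have ha : a < 2*e := by have := u.isLt; omega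
    have hb : b < 2*e := by have := v.isLt; omega
    have hab : a ≠ b := by
      intro h
      exact huv (Fin.ext (by omega))
    have hxor : ((a < 2*e-1 ∧ (b = 2*e-1 ∨ (a < b ∧ b - a ≤ e-1 ∧ b < 2*e-1) ∨
          (b < a ∧ e ≤ a - b))) ∧
        ¬(b < 2*e-1 ∧ (a = 2*e-1 ∨ (b < a ∧ a - b ≤ e-1 ∧ a < 2*e-1) ∨
          (a < b ∧ e ≤ b - a)))) ∨
        ((b < 2*e-1 ∧ (a = 2*e-1 ∨ (b < a ∧ a - b ≤ e-1 ∧ a < 2*e-1) ∨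
          (a < b ∧ e ≤ b - a))) ∧
        ¬(a < 2*e-1 ∧ (b = 2*e-1 ∨ (a < b ∧ b - a ≤ e-1 ∧ b < 2*e-1) ∨
          (b < a ∧ e ≤ a - b)))) := by
      omega
    rcases hxor with ⟨hA, hnB⟩ | ⟨hA, hnB⟩
    · exact ring_half he u v a b hua hvb ha hb hA hnB
    · have hsw : s(u,v) = s(v,u) := Sym2.eq_swap
      rw [hsw]
      exact ring_half he v u b a hvb hua hb ha hA hnB
  have hring3 : ∀ S ∈ ringSet M e he, ∃ z ∈ S.leaves,
      extColour c nc z ≠ extColour c nc S.centre := by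
    intro S hS
    obtain ⟨i, hi, rfl⟩ := mem_ringSet.mp hS
    have hcent : (ringStar M e he i hi).centre = newV M (⟨i, by omega⟩ : Fin (2*e)) := rfl
    rcases Nat.even_or_odd i with hpar | hpar
    · have hi2 : i % 2 = 0 := Nat.even_iff.mp hpar
      refine ⟨newV M (⟨2*e-1, by omega⟩ : Fin (2*e)), ?_, ?_⟩
      · rw [mem_ringStar_leaves]; left; simp
      · rw [hcent, extColour_new, extColour_new]
        intro hcon
        rw [Fin.ext_iff] at hcon
        simp only [hnc] at hcon
        omega
    · have hi2 : i % 2 = 1 := Nat.odd_iff.mp hpar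
      have hlt : i + 1 < 2*e - 1 := by omega
      refine ⟨newV M (⟨(i+1) % (2*e-1), by
          have := Nat.mod_lt (i+1) (y := 2*e-1) (by omega); omega⟩ : Fin (2*e)), ?_, ?_⟩
      · rw [mem_ringStar_leaves]
        right
        exact ⟨1, le_refl 1, by omega, rfl⟩
      · rw [hcent, extColour_new, extColour_new]
        intro hcon
        rw [Fin.ext_iff] at hcon
        simp only [hnc] at hcon
        rw [Nat.mod_eq_of_lt hlt] at hcon
        omega
  obtain ⟨sys', hw', hu', hne'⟩ := extend e M (2*e) he hM hsize sys c hweak hequit huniq hne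
    nc (ringSet M e he) hring1 hring2 hring3
  refine ⟨sys', extColour c nc, hw', ?_, hu', hne'⟩
  intro j
  rw [classCard_ext, hequit j]
  have hp : classCard nc j = e := classCard_parity e j
  rw [hp]
  have hdvd := Nat.dvd_of_mod_eq_zero hM
  have h2 : 2 ∣ M := dvd_trans ⟨e, rfl⟩ hdvd
  omega

lemma stepB (e M : ℕ) (he : 3 ≤ e) (hM : M % (2*e) = 0) (hsize : e < M / 2)
    (sys : EStarSystem M e) (c : Fin M → Fin 2)
    (hweak : IsWeakColouring sys c) (hequit : ∀ i, classCard c i = M / 2)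
    (huniq : ∀ χ, IsWeakColouring sys χ → ∃ π : Equiv.Perm (Fin 2), χ = π ∘ c)
    (hne : sys.stars.Nonempty) :
    ∃ (sys' : EStarSystem (M + 1) e) (c' : Fin (M+1) → Fin 2),
      IsWeakColouring sys' c' ∧
      (∀ χ, IsWeakColouring sys' χ → ∃ π : Equiv.Perm (Fin 2), χ = π ∘ c') ∧
      sys'.stars.Nonempty := by
  have hring2 : ∀ u v : Fin (M+1), M ≤ u.val → M ≤ v.val → u ≠ v →
      ∃! S, S ∈ (∅ : Finset (EStar (M+1) e)) ∧ s(u,v) ∈ S.edges := by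
    intro u v hu hv huv
    exact absurd (Fin.ext (by have h1 := u.isLt; have h2 := v.isLt; omega)) huv
  obtain ⟨sys', hw', hu', hne'⟩ := extend e M 1 he hM hsize sys c hweak hequit huniq hne
    (fun _ => 0) ∅
    (fun S hS => absurd hS (Finset.notMem_empty S))
    hring2
    (fun S hS => absurd hS (Finset.notMem_empty S))
  exact ⟨sys', _, hw', hu', hne'⟩

def Strong (e M : ℕ) : Prop :=
  ∃ (sys : EStarSystem M e) (c : Fin M → Fin 2),
    IsWeakColouring sys c ∧ (∀ i, classCard c i = M / 2) ∧
    (∀ χ, IsWeakColouring sys χ → ∃ π : Equiv.Perm (Fin 2), χ = π ∘ c) ∧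
    sys.stars.Nonempty

lemma iterate (e : ℕ) (he : 3 ≤ e) :
    ∀ (j M : ℕ), M % (2*e) = 0 → e < M / 2 → Strong e M → Strong e (M + 2*e*j) := by
  intro j
  induction j with
  | zero => intro M _ _ h; simpa using h
  | succ m ih =>
    intro M hM hsize h
    obtain ⟨sys, c, hw, heq, hu, hne⟩ := ih M hM hsize h
    have hM1 : (M + 2*e*m) % (2*e) = 0 := by
      rw [Nat.add_mul_mod_self_left]
      exact hM
    have hsize1 : e < (M + 2*e*m) / 2 := by omega
    obtain ⟨sys', c', hw', heq', hu', hne'⟩ :=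
      stepA e (M + 2*e*m) he hM1 hsize1 sys c hw heq hu hne
    have hrw : M + 2*e*(m+1) = (M + 2*e*m) + 2*e := by ring
    rw [hrw]
    exact ⟨sys', c', hw', heq', hu', hne'⟩

lemma goalOf {n e : ℕ} (sys' : EStarSystem n e) (c' : Fin n → Fin 2)
    (hw : IsWeakColouring sys' c')
    (hu : ∀ χ, IsWeakColouring sys' χ → ∃ π : Equiv.Perm (Fin 2), χ = π ∘ c')
    (hne : sys'.stars.Nonempty) :
    Chromatic sys' 2 ∧ UniquelyColourable sys' 2 := by
  refine ⟨⟨⟨c', hw⟩, ?_⟩, ?_⟩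
  · rintro ⟨χ, hχ⟩
    obtain ⟨S, hS⟩ := hne
    obtain ⟨a, _, hne'⟩ := hχ S hS
    exact hne' (Fin.ext (by
      have h1 := (χ a).isLt
      have h2 := (χ S.centre).isLt
      omega))
  · intro c₁ c₂ h₁ h₂
    obtain ⟨π₁, hπ₁⟩ := hu c₁ h₁
    obtain ⟨π₂, hπ₂⟩ := hu c₂ h₂
    refine ⟨π₁.symm.trans π₂, ?_⟩
    funext x
    rw [hπ₁, hπ₂]
    simp [Function.comp]

end SG

/-- Growing a strongly equitable uniquely 2-chromatic `e`-star system to every larger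
order `≡ 0,1 (mod 2e)`. -/
theorem stmt15 (e n₀ : ℕ) (he : 3 ≤ e) (hmod : n₀ % (2 * e) = 0)
    (sys : EStarSystem n₀ e)
    (hchr : Chromatic sys 2) (huniq : UniquelyColourable sys 2)
    (hc : ∃ c : Fin n₀ → Fin 2, IsWeakColouring sys c ∧
      ∀ i : Fin 2, classCard c i = n₀ / 2)
    (hsize : e < n₀ / 2)
    (n : ℕ) (hn : n₀ < n) (hadm : n % (2 * e) = 0 ∨ n % (2 * e) = 1) :
    ∃ sys' : EStarSystem n e, Chromatic sys' 2 ∧ UniquelyColourable sys' 2 := by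
  classical
  obtain ⟨c, hcweak, hcequit⟩ := hc
  have hne : sys.stars.Nonempty := by
    rw [Finset.nonempty_iff_ne_empty]
    intro hempty
    apply hchr.2
    refine ⟨fun _ => 0, ?_⟩
    intro S hS
    rw [hempty] at hS
    exact absurd hS (Finset.notMem_empty S)
  have hStrong : SG.Strong e n₀ :=
    ⟨sys, c, hcweak, hcequit, fun χ hχ => huniq c χ hcweak hχ, hne⟩
  obtain ⟨q0, hq0⟩ := Nat.dvd_of_mod_eq_zero hmod
  rcases hadm with h0 | h1
  · obtain ⟨q1, hq1⟩ := Nat.dvd_of_mod_eq_zero h0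
    have hq01 : q0 ≤ q1 := by
      by_contra hcon
      push_neg at hcon
      have hle : 2*e*q1 ≤ 2*e*q0 := Nat.mul_le_mul_left _ (le_of_lt hcon)
      omega
    have hnrw : n = n₀ + 2*e*(q1 - q0) := by
      have hms : 2*e*(q1 - q0) = 2*e*q1 - 2*e*q0 := Nat.mul_sub ..
      omega
    rw [hnrw]
    obtain ⟨sys', c', hw', _, hu', hne'⟩ :=
      SG.iterate e he (q1 - q0) n₀ hmod hsize hStrong
    exact ⟨sys', SG.goalOf sys' c' hw' hu' hne'⟩
  · have hq1 : n - 1 = 2*e*(n / (2*e)) := by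
      have := Nat.div_add_mod n (2*e)
      omega
    set q1 := n / (2*e) with hq1def
    have hq01 : q0 ≤ q1 := by
      by_contra hcon
      push_neg at hcon
      have hle : 2*e*(q1+1) ≤ 2*e*q0 := Nat.mul_le_mul_left _ (Nat.succ_le_of_lt hcon)
      have hx : 2*e*(q1+1) = 2*e*q1 + 2*e := by ring
      omega
    have hms : 2*e*(q1 - q0) = 2*e*q1 - 2*e*q0 := Nat.mul_sub ..
    have hnrw : n = (n₀ + 2*e*(q1 - q0)) + 1 := by omega
    rw [hnrw]
    obtain ⟨sys1, c1, hw1, heq1, hu1, hne1⟩ :=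
      SG.iterate e he (q1 - q0) n₀ hmod hsize hStrong
    have hM1 : (n₀ + 2*e*(q1 - q0)) % (2*e) = 0 := by
      rw [Nat.add_mul_mod_self_left]
      exact hmod
    have hsize1 : e < (n₀ + 2*e*(q1 - q0)) / 2 := by omega
    obtain ⟨sys', c', hw', hu', hne'⟩ :=
      SG.stepB e (n₀ + 2*e*(q1 - q0)) he hM1 hsize1 sys1 c1 hw1 heq1 hu1 hne1
    exact ⟨sys', SG.goalOf sys' c' hw' hu' hne'⟩
end
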